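/- arXiv:1409.6465 — 10 statements merged into one kernel-verified Lean document; each statement's English description precedes it below -/
import Mathlib

section
/- If C is a Weyl-type tensor on (V,g) and α ∈ V satisfies the conformal recurrence identity, then the symmetric bilinear form b(x,y) = g(α,x)·g(α,y) is C-compatible; explicitly, for all x1,x2,x3,x4 ∈ V: g(α,x1)·C(x2,x3,x4,α) + g(α,x2)·C(x3,x1,x4,α) + g(α,x3)·C(x1,x2,x4,α) = 0. -/
/-- A Weyl-type tensor on `(V, g)`: a 4-linear map with the symmetries of the
Weyl conformal curvature tensor, the first Bianchi identity, and total
tracelessness with respect to any `g`-dual pair of bases. -/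
structure IsWeylTensor (V : Type) [AddCommGroup V] [Module ℝ V]
    (g : V →ₗ[ℝ] V →ₗ[ℝ] ℝ)
    (C : V →ₗ[ℝ] V →ₗ[ℝ] V →ₗ[ℝ] V →ₗ[ℝ] ℝ) : Prop where
  antisym_fst : ∀ x y z w : V, C x y z w = - C y x z w
  antisym_snd : ∀ x y z w : V, C x y z w = - C x y w z
  pair_symm : ∀ x y z w : V, C x y z w = C z w x y
  bianchi : ∀ x y z w : V, C x y z w + C y z x w + C z x y w = 0
  traceless : ∀ (ι : Type) [Fintype ι] [DecidableEq ι] (e : Module.Basis ι ℝ V) (f : ι → V),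
    (∀ i j, g (e i) (f j) = if i = j then (1 : ℝ) else 0) →
    ∀ y z : V, ∑ i, C (e i) y z (f i) = 0

/-- The conformal recurrence identity for a vector `α`, coming from the second
Bianchi identity on a conformally recurrent manifold of dimension `n`. -/
def ConfRecVec (n : ℕ) (V : Type) [AddCommGroup V] [Module ℝ V]
    (g : V →ₗ[ℝ] V →ₗ[ℝ] ℝ)
    (C : V →ₗ[ℝ] V →ₗ[ℝ] V →ₗ[ℝ] V →ₗ[ℝ] ℝ) (α : V) : Prop :=
  ∀ x1 x2 x3 x4 x5 : V,
    g α x1 * C x2 x3 x4 x5 + g α x2 * C x3 x1 x4 x5 + g α x3 * C x1 x2 x4 x5 =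
      (1 / ((n : ℝ) - 3)) *
        (g x2 x5 * C x3 x1 x4 α + g x3 x5 * C x1 x2 x4 α + g x1 x5 * C x2 x3 x4 α +
          g x3 x4 * C x2 x1 x5 α + g x1 x4 * C x3 x2 x5 α + g x2 x4 * C x1 x3 x5 α)

/-- On a conformally recurrent space of dimension `n ≥ 5`, the
symmetric bilinear form `b(x,y) = g(α,x)·g(α,y)` is Weyl compatible. -/
theorem alpha_tensor_alpha_weyl_compatible
    (V : Type) [AddCommGroup V] [Module ℝ V] [FiniteDimensional ℝ V]
    (n : ℕ) (hn : 5 ≤ n) (hdim : Module.finrank ℝ V = n)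
    (g : V →ₗ[ℝ] V →ₗ[ℝ] ℝ)
    (hgsymm : ∀ x y : V, g x y = g y x)
    (hgnd : ∀ x : V, (∀ y : V, g x y = 0) → x = 0)
    (C : V →ₗ[ℝ] V →ₗ[ℝ] V →ₗ[ℝ] V →ₗ[ℝ] ℝ)
    (hC : IsWeylTensor V g C)
    (α : V) (hrec : ConfRecVec n V g C α) :
    ∀ x1 x2 x3 x4 : V,
      g α x1 * C x2 x3 x4 α + g α x2 * C x3 x1 x4 α + g α x3 * C x1 x2 x4 α = 0 := by
  intro x1 x2 x3 x4
  have hzero : ∀ x y : V, C x y α α = 0 := by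
    intro x y
    have h := hC.antisym_snd x y α α
    linarith
  have h := hrec x1 x2 x3 x4 α
  rw [hzero, hzero, hzero, hgsymm x2 α, hgsymm x3 α, hgsymm x1 α] at h
  set S := g α x1 * C x2 x3 x4 α + g α x2 * C x3 x1 x4 α + g α x3 * C x1 x2 x4 α with hS
  have h' : S = (1 / ((n : ℝ) - 3)) * S := by
    rw [hS]; linarith [h]
  have hn3 : (2 : ℝ) ≤ (n : ℝ) - 3 := by
    have : (5 : ℝ) ≤ (n : ℝ) := by exact_mod_cast hn
    linarith
  have hfrac : (1 / ((n : ℝ) - 3)) < 1 := by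
    rw [div_lt_one (by linarith)]; linarith
  nlinarith [h', hfrac]
end

section
/- If C is a Weyl-type tensor on (V,g), α ∈ V satisfies the conformal recurrence identity, and C(x,y,z,α) = 0 for all x,y,z ∈ V, then g(α,α)·C(x,y,z,w) = 0 for all x,y,z,w ∈ V; consequently either g(α,α) = 0 or C is identically zero. -/
/-- If moreover `C(x,y,z,α) = 0` for all `x,y,z`, then
`g(α,α)·C = 0`, so either `α` is null or `C` vanishes identically. -/
theorem conformal_recurrence_with_alpha_contraction_zero
    (V : Type) [AddCommGroup V] [Module ℝ V] [FiniteDimensional ℝ V]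
    (n : ℕ) (hn : 5 ≤ n) (hdim : Module.finrank ℝ V = n)
    (g : V →ₗ[ℝ] V →ₗ[ℝ] ℝ)
    (hgsymm : ∀ x y : V, g x y = g y x)
    (hgnd : ∀ x : V, (∀ y : V, g x y = 0) → x = 0)
    (C : V →ₗ[ℝ] V →ₗ[ℝ] V →ₗ[ℝ] V →ₗ[ℝ] ℝ)
    (hC : IsWeylTensor V g C)
    (α : V) (hrec : ConfRecVec n V g C α)
    (hcontr : ∀ x y z : V, C x y z α = 0) :
    (∀ x y z w : V, g α α * C x y z w = 0) ∧
      (g α α = 0 ∨ ∀ x y z w : V, C x y z w = 0) := by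
  have key : ∀ x y z w : V, g α α * C x y z w = 0 := by
    intro x y z w
    have h := hrec α x y z w
    have h1 : C y α z w = 0 := by rw [hC.pair_symm]; exact hcontr z w y
    have h2 : C α x z w = 0 := by
      rw [hC.pair_symm, hC.antisym_snd]; simp [hcontr]
    rw [h1, h2] at h
    simp only [hcontr] at h
    simpa using h
  refine ⟨key, ?_⟩
  by_cases hα : g α α = 0
  · exact Or.inl hα
  · refine Or.inr fun x y z w => ?_
    have := key x y z w
    exact (mul_eq_zero.mp this).resolve_left hα
end

section
/- If C is a Weyl-type tensor on (V,g) and α ∈ V satisfies the conformal recurrence identity with g(α,α) ≠ 0, then the bilinear form E(x,z) = C(x,α,α,z)/g(α,α) is symmetric, satisfies E(α,x) = E(x,α) = 0 for all x ∈ V, and for all x,y,z ∈ V one has C(x,y,z,α) = g(α,x)·E(y,z) − g(α,y)·E(x,z). -/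
/-- For a non-null recurrence vector `α`, the bilinear form
`E(x,z) = C(x,α,α,z)/g(α,α)` is symmetric, annihilates `α`, and
`C(x,y,z,α) = g(α,x)·E(y,z) − g(α,y)·E(x,z)`. -/
theorem electric_tensor_properties
    (V : Type) [AddCommGroup V] [Module ℝ V] [FiniteDimensional ℝ V]
    (n : ℕ) (hn : 5 ≤ n) (hdim : Module.finrank ℝ V = n)
    (g : V →ₗ[ℝ] V →ₗ[ℝ] ℝ)
    (hgsymm : ∀ x y : V, g x y = g y x)
    (hgnd : ∀ x : V, (∀ y : V, g x y = 0) → x = 0)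
    (C : V →ₗ[ℝ] V →ₗ[ℝ] V →ₗ[ℝ] V →ₗ[ℝ] ℝ)
    (hC : IsWeylTensor V g C)
    (α : V) (hrec : ConfRecVec n V g C α) (hα : g α α ≠ 0) :
    (∀ x z : V, C x α α z / g α α = C z α α x / g α α) ∧
    (∀ x : V, C α α α x / g α α = 0 ∧ C x α α α / g α α = 0) ∧
    (∀ x y z : V,
      C x y z α = g α x * (C y α α z / g α α) - g α y * (C x α α z / g α α)) := by
  have hzero : ∀ a b : V, C a b α α = 0 := by
    intro a b
    have h := hC.antisym_snd a b α α
    linarith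
  have hn5 : (5:ℝ) ≤ (n:ℝ) := by exact_mod_cast hn
  have hstar : ∀ x1 x2 x3 x4 : V,
      g α x1 * C x2 x3 x4 α + g α x2 * C x3 x1 x4 α + g α x3 * C x1 x2 x4 α = 0 := by
    intro x1 x2 x3 x4
    have h := hrec x1 x2 x3 x4 α
    rw [hzero, hzero, hzero, hgsymm x2 α, hgsymm x3 α, hgsymm x1 α] at h
    set S := g α x1 * C x2 x3 x4 α + g α x2 * C x3 x1 x4 α + g α x3 * C x1 x2 x4 α with hS
    have hne : ((n:ℝ) - 3) ≠ 0 := by linarith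
    have h2 : S * ((n:ℝ) - 3) = S := by
      field_simp at h
      linarith [h]
    have h3 : S * ((n:ℝ) - 4) = 0 := by linear_combination h2
    rcases mul_eq_zero.mp h3 with h4 | h4
    · exact h4
    · linarith
  refine ⟨?_, ?_, ?_⟩
  · intro x z
    have h1 := hC.pair_symm x α α z
    have h2 := hC.antisym_fst α z x α
    have h3 := hC.antisym_snd z α x α
    rw [h1, h2, h3]
    ring
  · intro x
    have h1 := hC.antisym_fst α α α x
    have h2 := hC.antisym_snd x α α α
    constructor
    · have : C α α α x = 0 := by linarith
      rw [this]; simp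
    · have : C x α α α = 0 := by linarith
      rw [this]; simp
  · intro x y z
    have h := hstar x y α z
    have h1 := hC.antisym_snd y α α z
    have h2 := hC.antisym_fst α x z α
    have h3 := hC.antisym_snd x α α z
    have e1 : C y α z α = -(C y α α z) := by linarith
    have e2 : C α x z α = C x α α z := by linarith
    rw [e1, e2] at h
    field_simp
    linarith
end

section
/- Let C be a Weyl-type tensor on (V,g) and let α ∈ V satisfy the conformal recurrence identity with g(α,α) ≠ 0. Then C admits the Kulkarni–Nomizu-type representation: for all x,y,z,w ∈ V, C(x,y,z,w) = (1/(n−3))·[ g(w,y)·E(x,z) − g(w,x)·E(y,z) + g(x,z)·E(y,w) − g(y,z)·E(x,w) ] − ((n−2)/((n−3)·g(α,α)))·[ g(α,y)·g(α,w)·E(x,z) − g(α,x)·g(α,w)·E(y,z) + g(α,x)·g(α,z)·E(y,w) − g(α,y)·g(α,z)·E(x,w) ], where E(x,z) = C(x,α,α,z)/g(α,α). -/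
/-- Kulkarni–Nomizu-type representation of the Weyl tensor of a
conformally recurrent space with non-null recurrence vector, in terms of the
electric tensor `E(x,z) = C(x,α,α,z)/g(α,α)`. -/
theorem weyl_kulkarni_nomizu_representation
    (V : Type) [AddCommGroup V] [Module ℝ V] [FiniteDimensional ℝ V]
    (n : ℕ) (hn : 5 ≤ n) (hdim : Module.finrank ℝ V = n)
    (g : V →ₗ[ℝ] V →ₗ[ℝ] ℝ)
    (hgsymm : ∀ x y : V, g x y = g y x)
    (hgnd : ∀ x : V, (∀ y : V, g x y = 0) → x = 0)
    (C : V →ₗ[ℝ] V →ₗ[ℝ] V →ₗ[ℝ] V →ₗ[ℝ] ℝ)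
    (hC : IsWeylTensor V g C)
    (α : V) (hrec : ConfRecVec n V g C α) (hα : g α α ≠ 0) :
    ∀ x y z w : V,
      C x y z w =
        (1 / ((n : ℝ) - 3)) *
          (g w y * (C x α α z / g α α) - g w x * (C y α α z / g α α) +
            g x z * (C y α α w / g α α) - g y z * (C x α α w / g α α)) -
        (((n : ℝ) - 2) / (((n : ℝ) - 3) * g α α)) *
          (g α y * g α w * (C x α α z / g α α) - g α x * g α w * (C y α α z / g α α) +
            g α x * g α z * (C y α α w / g α α) - g α y * g α z * (C x α α w / g α α)) := by
  
  obtain ⟨hA1, hA2, hPS, hB, hTr⟩ := hC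
  have hn5 : (5:ℝ) ≤ (n:ℝ) := by exact_mod_cast hn
  have hN3 : (n:ℝ) - 3 ≠ 0 := by intro h; linarith
  have hN4 : (n:ℝ) - 4 ≠ 0 := by intro h; linarith
  have hz : ∀ u v : V, C u v α α = 0 := by
    intro u v; have := hA2 u v α α; linarith
  have key1 : ∀ x y z : V, C x y z α = (g α y * C x α z α - g α x * C y α z α) / g α α := by
    intro x y z
    have h := hrec x y α z α
    rw [hz y x, hz α y, hz x α, hgsymm y α, hgsymm x α, hA1 α x z α] at h
    field_simp at h
    rw [eq_div_iff hα]
    have hP : (g α x * C y α z α - g α y * C x α z α + g α α * C x y z α) * ((n:ℝ) - 4) = 0 := by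
      linear_combination h
    rcases mul_eq_zero.mp hP with h1 | h2
    · linarith
    · exact absurd h2 hN4
  intro x y z w
  have h0 := hrec x y α z w
  rw [hA1 α x z w, hA1 α x z α, hA1 α y w α, hPS y α z w, hPS x α z w,
    key1 z w y, key1 z w x, key1 x y z, key1 y x w,
    hPS z α y α, hPS w α y α, hPS z α x α, hPS w α x α] at h0
  rw [hA2 x α α z, hA2 y α α z, hA2 y α α w, hA2 x α α w, hgsymm w y, hgsymm w x]
  field_simp at h0 ⊢
  linear_combination h0
end

section
/- Let C be a Weyl-type tensor on (V,g) and let α ∈ V satisfy the conformal recurrence identity with g(α,α) ≠ 0, and set E(x,z) = C(x,α,α,z)/g(α,α). Then the full contraction of C with itself satisfies C² = (4(n−2)/(n−3))·Σ_{p,q} E(e_p,e_q)·E(f_p,f_q), where C² = Σ_{p,q,r,s} C(e_p,e_q,e_r,e_s)·C(f_p,f_q,f_r,f_s) for a basis (e_i) of V with g-dual basis (f_i) (both contractions are independent of the choice of basis). -/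
set_option maxHeartbeats 4000000 in
/-- `C² = (4(n−2)/(n−3))·Σ_{p,q} E(e_p,e_q)·E(f_p,f_q)`, where the
contractions are taken with respect to any basis `(e_i)` with `g`-dual basis
`(f_i)` and `E(x,z) = C(x,α,α,z)/g(α,α)`. -/
theorem weyl_square_eq_electric_square
    (V : Type) [AddCommGroup V] [Module ℝ V] [FiniteDimensional ℝ V]
    (n : ℕ) (hn : 5 ≤ n) (hdim : Module.finrank ℝ V = n)
    (g : V →ₗ[ℝ] V →ₗ[ℝ] ℝ)
    (hgsymm : ∀ x y : V, g x y = g y x)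
    (hgnd : ∀ x : V, (∀ y : V, g x y = 0) → x = 0)
    (C : V →ₗ[ℝ] V →ₗ[ℝ] V →ₗ[ℝ] V →ₗ[ℝ] ℝ)
    (hC : IsWeylTensor V g C)
    (α : V) (hrec : ConfRecVec n V g C α) (hα : g α α ≠ 0) :
    ∀ (ι : Type) [Fintype ι] [DecidableEq ι] (e : Module.Basis ι ℝ V) (f : ι → V),
      (∀ i j, g (e i) (f j) = if i = j then (1 : ℝ) else 0) →
      (∑ p, ∑ q, ∑ r, ∑ s, C (e p) (e q) (e r) (e s) * C (f p) (f q) (f r) (f s)) =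
        (4 * ((n : ℝ) - 2) / ((n : ℝ) - 3)) *
          ∑ p, ∑ q, (C (e p) α α (e q) / g α α) * (C (f p) α α (f q) / g α α) := by
  intro ι _ _ e f hef
  have hn3 : ((n:ℝ) - 3) ≠ 0 := by
    have h5 : (5:ℝ) ≤ (n:ℝ) := by exact_mod_cast hn
    have : (0:ℝ) < (n:ℝ) - 3 := by linarith
    exact ne_of_gt this
  have hn4 : ((n:ℝ) - 4) ≠ 0 := by
    have h5 : (5:ℝ) ≤ (n:ℝ) := by exact_mod_cast hn
    have : (0:ℝ) < (n:ℝ) - 4 := by linarith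
    exact ne_of_gt this
  have as := hC.antisym_snd
  have af := hC.antisym_fst
  have ps := hC.pair_symm
  have z34 : ∀ x y z : V, C x y z z = 0 := fun x y z => by
    have := as x y z z; linarith
  have Esymm : ∀ u v : V, C u α α v = C v α α u := by
    intro u v
    rw [ps u α α v, af α v u α, as v α u α, neg_neg]
  -- dual-basis expansion
  have hrepr : ∀ (v : V) (j : ι), e.repr v j = g v (f j) := by
    intro v j
    conv_rhs => rw [← e.sum_repr v]
    simp only [map_sum, map_smul, LinearMap.sum_apply, LinearMap.smul_apply,
      smul_eq_mul, hef, mul_ite, mul_one, mul_zero]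
    simp
  have hv : ∀ v : V, (∑ i, g v (f i) • e i) = v := by
    intro v
    calc (∑ i, g v (f i) • e i) = ∑ i, e.repr v i • e i :=
          Finset.sum_congr rfl fun i _ => by rw [hrepr]
      _ = v := e.sum_repr v
  have c1 : ∀ v x y z : V, (∑ i, g v (f i) * C (e i) x y z) = C v x y z := by
    intro v x y z
    conv_rhs => rw [← hv v]
    simp only [map_sum, LinearMap.sum_apply, map_smul, LinearMap.smul_apply, smul_eq_mul]
  have c2 : ∀ v x y z : V, (∑ i, g v (f i) * C x (e i) y z) = C x v y z := by
    intro v x y z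
    conv_rhs => rw [← hv v]
    simp only [map_sum, LinearMap.sum_apply, map_smul, LinearMap.smul_apply, smul_eq_mul]
  have c3 : ∀ v x y w : V, (∑ i, g v (f i) * C x y (e i) w) = C x y v w := by
    intro v x y w
    conv_rhs => rw [← hv v]
    simp only [map_sum, LinearMap.sum_apply, map_smul, LinearMap.smul_apply, smul_eq_mul]
  have c4 : ∀ v x y z : V, (∑ i, g v (f i) * C x y z (e i)) = C x y z v := by
    intro v x y z
    conv_rhs => rw [← hv v]
    simp only [map_sum, LinearMap.sum_apply, map_smul, LinearMap.smul_apply, smul_eq_mul]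
  -- star identity
  have star : ∀ x y w : V, g α α * C x y α w = g α y * C x α α w - g α x * C y α α w := by
    intro x y w
    have h := hrec α x y α w
    have s1 : C α x α w = -C x α α w := af α x α w
    have s2 : C x α w α = -C x α α w := as x α w α
    have s3 : C y x w α = C x y α w := by rw [af y x w α, as x y w α, neg_neg]
    have s4 : C α y w α = C y α α w := by rw [af α y w α, as y α w α, neg_neg]
    have z1 : C y α α α = 0 := z34 y α α
    have z2 : C α x α α = 0 := z34 α x α
    have z3 : C x y α α = 0 := z34 x y α
    rw [s1, s2, s3, s4, z1, z2, z3, hgsymm y α, hgsymm x α] at h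
    have hk : (1 / ((n:ℝ)-3)) * ((n:ℝ)-3) = 1 := by field_simp
    refine mul_left_cancel₀ hn4 ?_
    linear_combination ((n:ℝ)-3) * h +
      (g α α * C x y α w + g α x * C y α α w - g α y * C x α α w) * hk
  -- main pointwise formula
  have main : ∀ x y z w : V, ((n:ℝ)-3) * (g α α)^2 * C x y z w =
      ((n:ℝ)-2) * ( g α y * g α z * C x α α w - g α y * g α w * C x α α z
        - g α x * g α z * C y α α w + g α x * g α w * C y α α z )
      + g α α * ( g y w * C x α α z + g x z * C y α α w
        - g x w * C y α α z - g y z * C x α α w ) := by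
    intro x y z w
    have h := hrec α x y z w
    have m1 : C y α z w = -C z w α y := by rw [ps y α z w]; exact as z w y α
    have m2 : C α x z w = C z w α x := by rw [af α x z w, ps x α z w, as z w x α, neg_neg]
    have m3 : C y α z α = -C y α α z := as y α z α
    have m4 : C α x z α = C x α α z := by rw [af α x z α, as x α z α, neg_neg]
    have m5 : C x y z α = -C x y α z := as x y z α
    have m6 : C x α w α = -C x α α w := as x α w α
    have m7 : C y x w α = C x y α w := by rw [af y x w α, as x y w α, neg_neg]
    have m8 : C α y w α = C y α α w := by rw [af α y w α, as y α w α, neg_neg]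
    rw [m1, m2, m3, m4, m5, m6, m7, m8] at h
    have hk : (1 / ((n:ℝ)-3)) * ((n:ℝ)-3) = 1 := by field_simp
    have st1 : g α α * C z w α y = g α w * C y α α z - g α z * C y α α w := by
      rw [star z w y, Esymm z y, Esymm w y]
    have st2 : g α α * C z w α x = g α w * C x α α z - g α z * C x α α w := by
      rw [star z w x, Esymm z x, Esymm w x]
    have st3 := star x y z
    have st4 := star x y w
    linear_combination ((n:ℝ)-3) * (g α α) * h
      + (g α α) * (g x w * -C y α α z + g y w * C x α α z + g α w * -C x y α z
          + g y z * -C x α α w + g α z * C x y α w + g x z * C y α α w) * hk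
      + ((n:ℝ)-3) * (g α x) * st1 - ((n:ℝ)-3) * (g α y) * st2
      - (g α w) * st3 + (g α z) * st4
  -- trace lemmas
  have tr14 : ∀ y z : V, (∑ i, C (e i) y z (f i)) = 0 := hC.traceless ι e f hef
  have tr24 : ∀ x z : V, (∑ i, C x (e i) z (f i)) = 0 := by
    intro x z
    calc (∑ i, C x (e i) z (f i)) = ∑ i, -(C (e i) x z (f i)) :=
          Finset.sum_congr rfl fun i _ => af x (e i) z (f i)
      _ = -(∑ i, C (e i) x z (f i)) := by rw [Finset.sum_neg_distrib]
      _ = 0 := by rw [tr14, neg_zero]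
  have tr23 : ∀ x w : V, (∑ i, C x (e i) (f i) w) = 0 := by
    intro x w
    calc (∑ i, C x (e i) (f i) w) = ∑ i, C (e i) x w (f i) :=
          Finset.sum_congr rfl fun i _ => by
            rw [as x (e i) (f i) w, af x (e i) w (f i), neg_neg]
      _ = 0 := tr14 x w
  have tr13 : ∀ y w : V, (∑ i, C (e i) y (f i) w) = 0 := by
    intro y w
    calc (∑ i, C (e i) y (f i) w) = ∑ i, -(C (e i) y w (f i)) :=
          Finset.sum_congr rfl fun i _ => as (e i) y (f i) w
      _ = -(∑ i, C (e i) y w (f i)) := by rw [Finset.sum_neg_distrib]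
      _ = 0 := by rw [tr14, neg_zero]
  have hout : ∀ u v : V, C α u v α = C u α α v := fun u v => by
    rw [af α u v α, as u α v α, neg_neg]
  -- T1
  have hT1 : (∑ p, ∑ q, ∑ r, ∑ s, C (e p) (e q) (e r) (e s) *
        (g α (f q) * g α (f r) * C (f p) α α (f s)))
      = ∑ p, ∑ q, C (e p) α α (e q) * C (f p) α α (f q) := by
    refine Finset.sum_congr rfl fun p _ => ?_
    calc (∑ q, ∑ r, ∑ s, C (e p) (e q) (e r) (e s) *
            (g α (f q) * g α (f r) * C (f p) α α (f s)))
        = ∑ q, ∑ s, ∑ r, C (e p) (e q) (e r) (e s) *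
            (g α (f q) * g α (f r) * C (f p) α α (f s)) :=
          Finset.sum_congr rfl fun q _ => by rw [Finset.sum_comm]
      _ = ∑ s, ∑ q, ∑ r, C (e p) (e q) (e r) (e s) *
            (g α (f q) * g α (f r) * C (f p) α α (f s)) := by rw [Finset.sum_comm]
      _ = ∑ s, C (e p) α α (e s) * C (f p) α α (f s) := by
          refine Finset.sum_congr rfl fun s _ => ?_
          calc (∑ q, ∑ r, C (e p) (e q) (e r) (e s) *
                  (g α (f q) * g α (f r) * C (f p) α α (f s)))
              = ∑ q, g α (f q) * (C (e p) (e q) α (e s) * C (f p) α α (f s)) := by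
                refine Finset.sum_congr rfl fun q _ => ?_
                calc (∑ r, C (e p) (e q) (e r) (e s) *
                        (g α (f q) * g α (f r) * C (f p) α α (f s)))
                    = (∑ r, g α (f r) * C (e p) (e q) (e r) (e s)) *
                        (g α (f q) * C (f p) α α (f s)) := by
                      rw [Finset.sum_mul]
                      exact Finset.sum_congr rfl fun r _ => by ring
                  _ = g α (f q) * (C (e p) (e q) α (e s) * C (f p) α α (f s)) := by
                      rw [c3 α (e p) (e q) (e s)]; ring
            _ = (∑ q, g α (f q) * C (e p) (e q) α (e s)) * C (f p) α α (f s) := by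
                rw [Finset.sum_mul]
                exact Finset.sum_congr rfl fun q _ => by ring
            _ = C (e p) α α (e s) * C (f p) α α (f s) := by rw [c2 α (e p) α (e s)]
  -- T2
  have hT2 : (∑ p, ∑ q, ∑ r, ∑ s, C (e p) (e q) (e r) (e s) *
        (g α (f q) * g α (f s) * C (f p) α α (f r)))
      = -(∑ p, ∑ q, C (e p) α α (e q) * C (f p) α α (f q)) := by
    have step : ∀ p : ι, (∑ q, ∑ r, ∑ s, C (e p) (e q) (e r) (e s) *
          (g α (f q) * g α (f s) * C (f p) α α (f r)))
        = ∑ r, -(C (e p) α α (e r) * C (f p) α α (f r)) := by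
      intro p
      calc (∑ q, ∑ r, ∑ s, C (e p) (e q) (e r) (e s) *
              (g α (f q) * g α (f s) * C (f p) α α (f r)))
          = ∑ q, ∑ r, g α (f q) * (C (e p) (e q) (e r) α * C (f p) α α (f r)) := by
            refine Finset.sum_congr rfl fun q _ => Finset.sum_congr rfl fun r _ => ?_
            calc (∑ s, C (e p) (e q) (e r) (e s) *
                    (g α (f q) * g α (f s) * C (f p) α α (f r)))
                = (∑ s, g α (f s) * C (e p) (e q) (e r) (e s)) *
                    (g α (f q) * C (f p) α α (f r)) := by
                  rw [Finset.sum_mul]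
                  exact Finset.sum_congr rfl fun s _ => by ring
              _ = g α (f q) * (C (e p) (e q) (e r) α * C (f p) α α (f r)) := by
                  rw [c4 α (e p) (e q) (e r)]; ring
        _ = ∑ r, ∑ q, g α (f q) * (C (e p) (e q) (e r) α * C (f p) α α (f r)) := by
            rw [Finset.sum_comm]
        _ = ∑ r, -(C (e p) α α (e r) * C (f p) α α (f r)) := by
            refine Finset.sum_congr rfl fun r _ => ?_
            calc (∑ q, g α (f q) * (C (e p) (e q) (e r) α * C (f p) α α (f r)))
                = (∑ q, g α (f q) * C (e p) (e q) (e r) α) * C (f p) α α (f r) := by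
                  rw [Finset.sum_mul]
                  exact Finset.sum_congr rfl fun q _ => by ring
              _ = C (e p) α (e r) α * C (f p) α α (f r) := by rw [c2 α (e p) (e r) α]
              _ = -(C (e p) α α (e r) * C (f p) α α (f r)) := by
                  rw [as (e p) α (e r) α]; ring
    calc (∑ p, ∑ q, ∑ r, ∑ s, C (e p) (e q) (e r) (e s) *
            (g α (f q) * g α (f s) * C (f p) α α (f r)))
        = ∑ p, ∑ r, -(C (e p) α α (e r) * C (f p) α α (f r)) :=
          Finset.sum_congr rfl fun p _ => step p
      _ = -(∑ p, ∑ q, C (e p) α α (e q) * C (f p) α α (f q)) := by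
          simp only [Finset.sum_neg_distrib]
  -- T3
  have hT3 : (∑ p, ∑ q, ∑ r, ∑ s, C (e p) (e q) (e r) (e s) *
        (g α (f p) * g α (f r) * C (f q) α α (f s)))
      = -(∑ p, ∑ q, C (e p) α α (e q) * C (f p) α α (f q)) := by
    calc (∑ p, ∑ q, ∑ r, ∑ s, C (e p) (e q) (e r) (e s) *
            (g α (f p) * g α (f r) * C (f q) α α (f s)))
        = ∑ p, ∑ q, ∑ s, ∑ r, C (e p) (e q) (e r) (e s) *
            (g α (f p) * g α (f r) * C (f q) α α (f s)) :=
          Finset.sum_congr rfl fun p _ => Finset.sum_congr rfl fun q _ => by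
            rw [Finset.sum_comm]
      _ = ∑ q, ∑ p, ∑ s, ∑ r, C (e p) (e q) (e r) (e s) *
            (g α (f p) * g α (f r) * C (f q) α α (f s)) := by rw [Finset.sum_comm]
      _ = ∑ q, ∑ s, ∑ p, ∑ r, C (e p) (e q) (e r) (e s) *
            (g α (f p) * g α (f r) * C (f q) α α (f s)) :=
          Finset.sum_congr rfl fun q _ => by rw [Finset.sum_comm]
      _ = ∑ q, ∑ s, -(C (e q) α α (e s) * C (f q) α α (f s)) := by
          refine Finset.sum_congr rfl fun q _ => Finset.sum_congr rfl fun s _ => ?_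
          calc (∑ p, ∑ r, C (e p) (e q) (e r) (e s) *
                  (g α (f p) * g α (f r) * C (f q) α α (f s)))
              = ∑ p, g α (f p) * (C (e p) (e q) α (e s) * C (f q) α α (f s)) := by
                refine Finset.sum_congr rfl fun p _ => ?_
                calc (∑ r, C (e p) (e q) (e r) (e s) *
                        (g α (f p) * g α (f r) * C (f q) α α (f s)))
                    = (∑ r, g α (f r) * C (e p) (e q) (e r) (e s)) *
                        (g α (f p) * C (f q) α α (f s)) := by
                      rw [Finset.sum_mul]
                      exact Finset.sum_congr rfl fun r _ => by ring
                  _ = g α (f p) * (C (e p) (e q) α (e s) * C (f q) α α (f s)) := by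
                      rw [c3 α (e p) (e q) (e s)]; ring
            _ = (∑ p, g α (f p) * C (e p) (e q) α (e s)) * C (f q) α α (f s) := by
                rw [Finset.sum_mul]
                exact Finset.sum_congr rfl fun p _ => by ring
            _ = C α (e q) α (e s) * C (f q) α α (f s) := by rw [c1 α (e q) α (e s)]
            _ = -(C (e q) α α (e s) * C (f q) α α (f s)) := by
                rw [af α (e q) α (e s)]; ring
      _ = -(∑ p, ∑ q, C (e p) α α (e q) * C (f p) α α (f q)) := by
          simp only [Finset.sum_neg_distrib]
  -- T4
  have hT4 : (∑ p, ∑ q, ∑ r, ∑ s, C (e p) (e q) (e r) (e s) *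
        (g α (f p) * g α (f s) * C (f q) α α (f r)))
      = ∑ p, ∑ q, C (e p) α α (e q) * C (f p) α α (f q) := by
    calc (∑ p, ∑ q, ∑ r, ∑ s, C (e p) (e q) (e r) (e s) *
            (g α (f p) * g α (f s) * C (f q) α α (f r)))
        = ∑ p, ∑ q, ∑ r, g α (f p) * (C (e p) (e q) (e r) α * C (f q) α α (f r)) := by
          refine Finset.sum_congr rfl fun p _ => Finset.sum_congr rfl fun q _ =>
            Finset.sum_congr rfl fun r _ => ?_
          calc (∑ s, C (e p) (e q) (e r) (e s) *
                  (g α (f p) * g α (f s) * C (f q) α α (f r)))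
              = (∑ s, g α (f s) * C (e p) (e q) (e r) (e s)) *
                  (g α (f p) * C (f q) α α (f r)) := by
                rw [Finset.sum_mul]
                exact Finset.sum_congr rfl fun s _ => by ring
            _ = g α (f p) * (C (e p) (e q) (e r) α * C (f q) α α (f r)) := by
                rw [c4 α (e p) (e q) (e r)]; ring
      _ = ∑ q, ∑ p, ∑ r, g α (f p) * (C (e p) (e q) (e r) α * C (f q) α α (f r)) := by
          rw [Finset.sum_comm]
      _ = ∑ q, ∑ r, ∑ p, g α (f p) * (C (e p) (e q) (e r) α * C (f q) α α (f r)) :=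
          Finset.sum_congr rfl fun q _ => by rw [Finset.sum_comm]
      _ = ∑ q, ∑ r, C (e q) α α (e r) * C (f q) α α (f r) := by
          refine Finset.sum_congr rfl fun q _ => Finset.sum_congr rfl fun r _ => ?_
          calc (∑ p, g α (f p) * (C (e p) (e q) (e r) α * C (f q) α α (f r)))
              = (∑ p, g α (f p) * C (e p) (e q) (e r) α) * C (f q) α α (f r) := by
                rw [Finset.sum_mul]
                exact Finset.sum_congr rfl fun p _ => by ring
            _ = C α (e q) (e r) α * C (f q) α α (f r) := by rw [c1 α (e q) (e r) α]
            _ = C (e q) α α (e r) * C (f q) α α (f r) := by rw [hout (e q) (e r)]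
  -- T5
  have hT5 : (∑ p, ∑ q, ∑ r, ∑ s, C (e p) (e q) (e r) (e s) *
        (g (f q) (f s) * C (f p) α α (f r))) = 0 := by
    calc (∑ p, ∑ q, ∑ r, ∑ s, C (e p) (e q) (e r) (e s) *
            (g (f q) (f s) * C (f p) α α (f r)))
        = ∑ p, ∑ q, ∑ r, C (e p) (e q) (e r) (f q) * C (f p) α α (f r) := by
          refine Finset.sum_congr rfl fun p _ => Finset.sum_congr rfl fun q _ =>
            Finset.sum_congr rfl fun r _ => ?_
          calc (∑ s, C (e p) (e q) (e r) (e s) * (g (f q) (f s) * C (f p) α α (f r)))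
              = (∑ s, g (f q) (f s) * C (e p) (e q) (e r) (e s)) * C (f p) α α (f r) := by
                rw [Finset.sum_mul]
                exact Finset.sum_congr rfl fun s _ => by ring
            _ = C (e p) (e q) (e r) (f q) * C (f p) α α (f r) := by
                rw [c4 (f q) (e p) (e q) (e r)]
      _ = ∑ p, ∑ r, ∑ q, C (e p) (e q) (e r) (f q) * C (f p) α α (f r) :=
          Finset.sum_congr rfl fun p _ => by rw [Finset.sum_comm]
      _ = ∑ p, ∑ r, (0:ℝ) := by
          refine Finset.sum_congr rfl fun p _ => Finset.sum_congr rfl fun r _ => ?_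
          calc (∑ q, C (e p) (e q) (e r) (f q) * C (f p) α α (f r))
              = (∑ q, C (e p) (e q) (e r) (f q)) * C (f p) α α (f r) := by
                rw [Finset.sum_mul]
            _ = 0 := by rw [tr24 (e p) (e r), zero_mul]
      _ = 0 := by simp
  -- T6
  have hT6 : (∑ p, ∑ q, ∑ r, ∑ s, C (e p) (e q) (e r) (e s) *
        (g (f p) (f r) * C (f q) α α (f s))) = 0 := by
    calc (∑ p, ∑ q, ∑ r, ∑ s, C (e p) (e q) (e r) (e s) *
            (g (f p) (f r) * C (f q) α α (f s)))
        = ∑ p, ∑ q, ∑ s, ∑ r, C (e p) (e q) (e r) (e s) *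
            (g (f p) (f r) * C (f q) α α (f s)) :=
          Finset.sum_congr rfl fun p _ => Finset.sum_congr rfl fun q _ => by
            rw [Finset.sum_comm]
      _ = ∑ p, ∑ q, ∑ s, C (e p) (e q) (f p) (e s) * C (f q) α α (f s) := by
          refine Finset.sum_congr rfl fun p _ => Finset.sum_congr rfl fun q _ =>
            Finset.sum_congr rfl fun s _ => ?_
          calc (∑ r, C (e p) (e q) (e r) (e s) * (g (f p) (f r) * C (f q) α α (f s)))
              = (∑ r, g (f p) (f r) * C (e p) (e q) (e r) (e s)) * C (f q) α α (f s) := by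
                rw [Finset.sum_mul]
                exact Finset.sum_congr rfl fun r _ => by ring
            _ = C (e p) (e q) (f p) (e s) * C (f q) α α (f s) := by
                rw [c3 (f p) (e p) (e q) (e s)]
      _ = ∑ q, ∑ p, ∑ s, C (e p) (e q) (f p) (e s) * C (f q) α α (f s) := by
          rw [Finset.sum_comm]
      _ = ∑ q, ∑ s, ∑ p, C (e p) (e q) (f p) (e s) * C (f q) α α (f s) :=
          Finset.sum_congr rfl fun q _ => by rw [Finset.sum_comm]
      _ = ∑ q, ∑ s, (0:ℝ) := by
          refine Finset.sum_congr rfl fun q _ => Finset.sum_congr rfl fun s _ => ?_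
          calc (∑ p, C (e p) (e q) (f p) (e s) * C (f q) α α (f s))
              = (∑ p, C (e p) (e q) (f p) (e s)) * C (f q) α α (f s) := by
                rw [Finset.sum_mul]
            _ = 0 := by rw [tr13 (e q) (e s), zero_mul]
      _ = 0 := by simp
  -- T7
  have hT7 : (∑ p, ∑ q, ∑ r, ∑ s, C (e p) (e q) (e r) (e s) *
        (g (f p) (f s) * C (f q) α α (f r))) = 0 := by
    calc (∑ p, ∑ q, ∑ r, ∑ s, C (e p) (e q) (e r) (e s) *
            (g (f p) (f s) * C (f q) α α (f r)))
        = ∑ p, ∑ q, ∑ r, C (e p) (e q) (e r) (f p) * C (f q) α α (f r) := by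
          refine Finset.sum_congr rfl fun p _ => Finset.sum_congr rfl fun q _ =>
            Finset.sum_congr rfl fun r _ => ?_
          calc (∑ s, C (e p) (e q) (e r) (e s) * (g (f p) (f s) * C (f q) α α (f r)))
              = (∑ s, g (f p) (f s) * C (e p) (e q) (e r) (e s)) * C (f q) α α (f r) := by
                rw [Finset.sum_mul]
                exact Finset.sum_congr rfl fun s _ => by ring
            _ = C (e p) (e q) (e r) (f p) * C (f q) α α (f r) := by
                rw [c4 (f p) (e p) (e q) (e r)]
      _ = ∑ q, ∑ p, ∑ r, C (e p) (e q) (e r) (f p) * C (f q) α α (f r) := by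
          rw [Finset.sum_comm]
      _ = ∑ q, ∑ r, ∑ p, C (e p) (e q) (e r) (f p) * C (f q) α α (f r) :=
          Finset.sum_congr rfl fun q _ => by rw [Finset.sum_comm]
      _ = ∑ q, ∑ r, (0:ℝ) := by
          refine Finset.sum_congr rfl fun q _ => Finset.sum_congr rfl fun r _ => ?_
          calc (∑ p, C (e p) (e q) (e r) (f p) * C (f q) α α (f r))
              = (∑ p, C (e p) (e q) (e r) (f p)) * C (f q) α α (f r) := by
                rw [Finset.sum_mul]
            _ = 0 := by rw [tr14 (e q) (e r), zero_mul]
      _ = 0 := by simp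
  -- T8
  have hT8 : (∑ p, ∑ q, ∑ r, ∑ s, C (e p) (e q) (e r) (e s) *
        (g (f q) (f r) * C (f p) α α (f s))) = 0 := by
    calc (∑ p, ∑ q, ∑ r, ∑ s, C (e p) (e q) (e r) (e s) *
            (g (f q) (f r) * C (f p) α α (f s)))
        = ∑ p, ∑ q, ∑ s, ∑ r, C (e p) (e q) (e r) (e s) *
            (g (f q) (f r) * C (f p) α α (f s)) :=
          Finset.sum_congr rfl fun p _ => Finset.sum_congr rfl fun q _ => by
            rw [Finset.sum_comm]
      _ = ∑ p, ∑ q, ∑ s, C (e p) (e q) (f q) (e s) * C (f p) α α (f s) := by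
          refine Finset.sum_congr rfl fun p _ => Finset.sum_congr rfl fun q _ =>
            Finset.sum_congr rfl fun s _ => ?_
          calc (∑ r, C (e p) (e q) (e r) (e s) * (g (f q) (f r) * C (f p) α α (f s)))
              = (∑ r, g (f q) (f r) * C (e p) (e q) (e r) (e s)) * C (f p) α α (f s) := by
                rw [Finset.sum_mul]
                exact Finset.sum_congr rfl fun r _ => by ring
            _ = C (e p) (e q) (f q) (e s) * C (f p) α α (f s) := by
                rw [c3 (f q) (e p) (e q) (e s)]
      _ = ∑ p, ∑ s, ∑ q, C (e p) (e q) (f q) (e s) * C (f p) α α (f s) :=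
          Finset.sum_congr rfl fun p _ => by rw [Finset.sum_comm]
      _ = ∑ p, ∑ s, (0:ℝ) := by
          refine Finset.sum_congr rfl fun p _ => Finset.sum_congr rfl fun s _ => ?_
          calc (∑ q, C (e p) (e q) (f q) (e s) * C (f p) α α (f s))
              = (∑ q, C (e p) (e q) (f q) (e s)) * C (f p) α α (f s) := by
                rw [Finset.sum_mul]
            _ = 0 := by rw [tr23 (e p) (e s), zero_mul]
      _ = 0 := by simp
  -- expansion of each summand
  have expand : ∀ p q r s : ι,
      ((n:ℝ)-3) * (g α α)^2 *
        (C (e p) (e q) (e r) (e s) * C (f p) (f q) (f r) (f s)) =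
      ((n:ℝ)-2) * (C (e p) (e q) (e r) (e s) *
          (g α (f q) * g α (f r) * C (f p) α α (f s)))
      - ((n:ℝ)-2) * (C (e p) (e q) (e r) (e s) *
          (g α (f q) * g α (f s) * C (f p) α α (f r)))
      - ((n:ℝ)-2) * (C (e p) (e q) (e r) (e s) *
          (g α (f p) * g α (f r) * C (f q) α α (f s)))
      + ((n:ℝ)-2) * (C (e p) (e q) (e r) (e s) *
          (g α (f p) * g α (f s) * C (f q) α α (f r)))
      + g α α * (C (e p) (e q) (e r) (e s) * (g (f q) (f s) * C (f p) α α (f r)))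
      + g α α * (C (e p) (e q) (e r) (e s) * (g (f p) (f r) * C (f q) α α (f s)))
      - g α α * (C (e p) (e q) (e r) (e s) * (g (f p) (f s) * C (f q) α α (f r)))
      - g α α * (C (e p) (e q) (e r) (e s) * (g (f q) (f r) * C (f p) α α (f s))) := by
    intro p q r s
    linear_combination (C (e p) (e q) (e r) (e s)) * main (f p) (f q) (f r) (f s)
  -- assemble
  have hbig : ((n:ℝ)-3) * (g α α)^2 *
      (∑ p, ∑ q, ∑ r, ∑ s, C (e p) (e q) (e r) (e s) * C (f p) (f q) (f r) (f s)) =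
      4 * ((n:ℝ)-2) * (∑ p, ∑ q, C (e p) α α (e q) * C (f p) α α (f q)) := by
    calc ((n:ℝ)-3) * (g α α)^2 *
        (∑ p, ∑ q, ∑ r, ∑ s, C (e p) (e q) (e r) (e s) * C (f p) (f q) (f r) (f s))
        = ∑ p, ∑ q, ∑ r, ∑ s, ((n:ℝ)-3) * (g α α)^2 *
            (C (e p) (e q) (e r) (e s) * C (f p) (f q) (f r) (f s)) := by
          simp only [Finset.mul_sum]
      _ = ∑ p, ∑ q, ∑ r, ∑ s, (
          ((n:ℝ)-2) * (C (e p) (e q) (e r) (e s) *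
              (g α (f q) * g α (f r) * C (f p) α α (f s)))
          - ((n:ℝ)-2) * (C (e p) (e q) (e r) (e s) *
              (g α (f q) * g α (f s) * C (f p) α α (f r)))
          - ((n:ℝ)-2) * (C (e p) (e q) (e r) (e s) *
              (g α (f p) * g α (f r) * C (f q) α α (f s)))
          + ((n:ℝ)-2) * (C (e p) (e q) (e r) (e s) *
              (g α (f p) * g α (f s) * C (f q) α α (f r)))
          + g α α * (C (e p) (e q) (e r) (e s) * (g (f q) (f s) * C (f p) α α (f r)))
          + g α α * (C (e p) (e q) (e r) (e s) * (g (f p) (f r) * C (f q) α α (f s)))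
          - g α α * (C (e p) (e q) (e r) (e s) * (g (f p) (f s) * C (f q) α α (f r)))
          - g α α * (C (e p) (e q) (e r) (e s) * (g (f q) (f r) * C (f p) α α (f s)))) :=
          Finset.sum_congr rfl fun p _ => Finset.sum_congr rfl fun q _ =>
            Finset.sum_congr rfl fun r _ => Finset.sum_congr rfl fun s _ =>
              expand p q r s
      _ = 4 * ((n:ℝ)-2) * (∑ p, ∑ q, C (e p) α α (e q) * C (f p) α α (f q)) := by
          simp only [Finset.sum_add_distrib, Finset.sum_sub_distrib, ← Finset.mul_sum]
          rw [hT1, hT2, hT3, hT4, hT5, hT6, hT7, hT8]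
          ring
  -- finish
  have hRHS : (∑ p, ∑ q, (C (e p) α α (e q) / g α α) * (C (f p) α α (f q) / g α α))
      = (∑ p, ∑ q, C (e p) α α (e q) * C (f p) α α (f q)) / (g α α * g α α) := by
    simp only [div_mul_div_comm, ← Finset.sum_div]
  rw [hRHS]
  field_simp
  linear_combination hbig
end

section
/- Let C be a Weyl-type tensor on (V,g) with C² ≠ 0 and let α ∈ V satisfy the conformal recurrence identity. Then α is an eigenvector of the bilinear form h with eigenvalue (n−3)/(2(n−2)): for all y ∈ V, h(α,y) = ((n−3)/(2(n−2)))·g(α,y). -/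
section
variable {V : Type} [AddCommGroup V] [Module ℝ V]
  (g : V →ₗ[ℝ] V →ₗ[ℝ] ℝ)
  {ι : Type} [Fintype ι] [DecidableEq ι] (e : Module.Basis ι ℝ V) (f : ι → V)

lemma aux_repr (hgsymm : ∀ x y : V, g x y = g y x)
    (hdual : ∀ i j, g (e i) (f j) = if i = j then (1 : ℝ) else 0) :
    ∀ v : V, ∑ i, g v (f i) • e i = v := by
  intro v
  have h : ∀ i, g v (f i) = e.repr v i := by
    intro i
    conv_lhs => rw [← e.sum_repr v]
    simp [hdual, Finset.sum_ite_eq', -Module.Basis.sum_repr]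
  simp_rw [h]
  exact e.sum_repr v

lemma aux_repr2 (hgsymm : ∀ x y : V, g x y = g y x)
    (hgnd : ∀ x : V, (∀ y : V, g x y = 0) → x = 0)
    (hdual : ∀ i j, g (e i) (f j) = if i = j then (1 : ℝ) else 0) :
    ∀ v : V, ∑ i, g v (e i) • f i = v := by
  intro v
  have key : ∀ w : V, g (∑ i, g v (e i) • f i) w = g v w := by
    intro w
    have hw : ∀ i, g (f i) w = g w (f i) := fun i => hgsymm _ _
    have : g (∑ i, g v (e i) • f i) w = ∑ i, g v (e i) * g w (f i) := by
      simp [map_sum, hw]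
    rw [this]
    conv_rhs => rw [← aux_repr g e f hgsymm hdual w]
    simp [map_sum, mul_comm]
  have h0 := hgnd (∑ i, g v (e i) • f i - v) (fun w => by
    rw [map_sub, LinearMap.sub_apply, key w, sub_self])
  exact sub_eq_zero.mp h0

lemma aux_swap (hgsymm : ∀ x y : V, g x y = g y x)
    (hgnd : ∀ x : V, (∀ y : V, g x y = 0) → x = 0)
    (hdual : ∀ i j, g (e i) (f j) = if i = j then (1 : ℝ) else 0)
    (A B : V →ₗ[ℝ] ℝ) :
    ∑ i, A (e i) * B (f i) = ∑ i, A (f i) * B (e i) := by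
  have hvec : ∑ i, A (e i) • f i = ∑ i, A (f i) • e i := by
    have key : ∀ w : V, g (∑ i, A (e i) • f i - ∑ i, A (f i) • e i) w = 0 := by
      intro w
      have h1 : g (∑ i, A (e i) • f i) w = A w := by
        have : g (∑ i, A (e i) • f i) w = ∑ i, A (e i) * g w (f i) := by
          simp [map_sum]
          exact Finset.sum_congr rfl fun i _ => by rw [hgsymm]
        rw [this]
        conv_rhs => rw [← aux_repr g e f hgsymm hdual w]
        simp [mul_comm]
      have h2 : g (∑ i, A (f i) • e i) w = A w := by
        have : g (∑ i, A (f i) • e i) w = ∑ i, A (f i) * g w (e i) := by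
          simp [map_sum]
          exact Finset.sum_congr rfl fun i _ => by rw [hgsymm]
        rw [this]
        conv_rhs => rw [← aux_repr2 g e f hgsymm hgnd hdual w]
        simp [mul_comm]
      rw [map_sub, LinearMap.sub_apply, h1, h2, sub_self]
    have := hgnd _ key
    exact sub_eq_zero.mp this
  calc ∑ i, A (e i) * B (f i) = B (∑ i, A (e i) • f i) := by simp [mul_comm]
    _ = B (∑ i, A (f i) • e i) := by rw [hvec]
    _ = ∑ i, A (f i) * B (e i) := by simp [mul_comm]

lemma aux_contract_f (hgsymm : ∀ x y : V, g x y = g y x)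
    (hgnd : ∀ x : V, (∀ y : V, g x y = 0) → x = 0)
    (hdual : ∀ i j, g (e i) (f j) = if i = j then (1 : ℝ) else 0)
    (A : V →ₗ[ℝ] ℝ) (v : V) :
    ∑ i, g v (e i) * A (f i) = A v := by
  conv_rhs => rw [← aux_repr2 g e f hgsymm hgnd hdual v]
  simp

lemma aux_contract_e (hgsymm : ∀ x y : V, g x y = g y x)
    (hdual : ∀ i j, g (e i) (f j) = if i = j then (1 : ℝ) else 0)
    (A : V →ₗ[ℝ] ℝ) (v : V) :
    ∑ i, g v (f i) * A (e i) = A v := by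
  conv_rhs => rw [← aux_repr g e f hgsymm hdual v]
  simp

lemma aux_tr' (C : V →ₗ[ℝ] V →ₗ[ℝ] V →ₗ[ℝ] V →ₗ[ℝ] ℝ)
    (hgsymm : ∀ x y : V, g x y = g y x)
    (hdual : ∀ i j, g (e i) (f j) = if i = j then (1 : ℝ) else 0)
    (htr : ∀ y z : V, ∑ i, C (e i) y z (f i) = 0) :
    ∀ y z : V, ∑ i, C (f i) y z (e i) = 0 := by
  intro y z
  have expand : ∀ i, C (f i) y z (e i) = ∑ j, g (f i) (f j) * C (e j) y z (e i) := by
    intro i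
    conv_lhs => rw [← aux_repr g e f hgsymm hdual (f i)]
    simp
  calc ∑ i, C (f i) y z (e i)
      = ∑ i, ∑ j, g (f i) (f j) * C (e j) y z (e i) :=
        Finset.sum_congr rfl fun i _ => expand i
    _ = ∑ j, ∑ i, g (f i) (f j) * C (e j) y z (e i) := Finset.sum_comm
    _ = ∑ j, C (e j) y z (f j) := by
        refine Finset.sum_congr rfl fun j _ => ?_
        have h1 : ∀ i, g (f i) (f j) * C (e j) y z (e i)
            = g (f j) (f i) * C (e j) y z (e i) := fun i => by rw [hgsymm]
        rw [Finset.sum_congr rfl fun i _ => h1 i]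
        conv_rhs => rw [← aux_repr g e f hgsymm hdual (f j)]
        simp
    _ = 0 := htr y z

lemma sum3_rot {M : Type*} [AddCommMonoid M] (F : ι → ι → ι → M) :
    ∑ p, ∑ q, ∑ r, F p q r = ∑ q, ∑ r, ∑ p, F p q r := by
  rw [Finset.sum_comm]
  exact Finset.sum_congr rfl fun q _ => Finset.sum_comm

lemma sum4_rot {M : Type*} [AddCommMonoid M] (F : ι → ι → ι → ι → M) :
    ∑ p, ∑ q, ∑ r, ∑ s, F p q r s = ∑ q, ∑ r, ∑ s, ∑ p, F p q r s := by
  rw [Finset.sum_comm]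
  exact Finset.sum_congr rfl fun q _ => sum3_rot _

lemma sum3_rev {M : Type*} [AddCommMonoid M] (F : ι → ι → ι → M) :
    ∑ p, ∑ q, ∑ r, F p q r = ∑ r, ∑ q, ∑ p, F p q r := by
  rw [Finset.sum_comm]
  rw [Finset.sum_congr rfl fun q _ => (Finset.sum_comm (γ := ι))]
  exact Finset.sum_comm


lemma aux_Dsym (C : V →ₗ[ℝ] V →ₗ[ℝ] V →ₗ[ℝ] V →ₗ[ℝ] ℝ)
    (hgsymm : ∀ x y : V, g x y = g y x)
    (hgnd : ∀ x : V, (∀ y : V, g x y = 0) → x = 0)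
    (hdual : ∀ i j, g (e i) (f j) = if i = j then (1 : ℝ) else 0)
    (a b : V) :
    ∑ q, ∑ r, ∑ s, C a (e q) (e r) (e s) * C b (f q) (f r) (f s)
      = ∑ q, ∑ r, ∑ s, C b (e q) (e r) (e s) * C a (f q) (f r) (f s) := by
  have hswap := aux_swap g e f hgsymm hgnd hdual
  calc ∑ q, ∑ r, ∑ s, C a (e q) (e r) (e s) * C b (f q) (f r) (f s)
      = ∑ q, ∑ r, ∑ s, C a (e q) (e r) (f s) * C b (f q) (f r) (e s) := by
        refine Finset.sum_congr rfl fun q _ => Finset.sum_congr rfl fun r _ => ?_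
        exact hswap (C a (e q) (e r)) (C b (f q) (f r))
    _ = ∑ q, ∑ s, ∑ r, C a (e q) (f r) (f s) * C b (f q) (e r) (e s) := by
        refine Finset.sum_congr rfl fun q _ => ?_
        rw [Finset.sum_comm]
        refine Finset.sum_congr rfl fun s _ => ?_
        have := hswap ((C a (e q)).flip (f s)) ((C b (f q)).flip (e s))
        simpa only [LinearMap.flip_apply] using this
    _ = ∑ s, ∑ r, ∑ q, C a (f q) (f r) (f s) * C b (e q) (e r) (e s) := by
        rw [sum3_rot]
        refine Finset.sum_congr rfl fun s _ => Finset.sum_congr rfl fun r _ => ?_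
        have := hswap (((C a).flip (f r)).flip (f s)) (((C b).flip (e r)).flip (e s))
        simpa only [LinearMap.flip_apply] using this
    _ = ∑ q, ∑ r, ∑ s, C a (f q) (f r) (f s) * C b (e q) (e r) (e s) := by
        exact sum3_rev _
    _ = ∑ q, ∑ r, ∑ s, C b (e q) (e r) (e s) * C a (f q) (f r) (f s) := by
        exact Finset.sum_congr rfl fun q _ => Finset.sum_congr rfl fun r _ =>
          Finset.sum_congr rfl fun s _ => mul_comm _ _

end

section
variable {V : Type} [AddCommGroup V] [Module ℝ V]
  (g : V →ₗ[ℝ] V →ₗ[ℝ] ℝ)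
  {ι : Type} [Fintype ι] [DecidableEq ι] (e : Module.Basis ι ℝ V) (f : ι → V)
  (C : V →ₗ[ℝ] V →ₗ[ℝ] V →ₗ[ℝ] V →ₗ[ℝ] ℝ)

lemma aux_L1 (y α : V) :
    ∑ p, ∑ q, ∑ r, ∑ s, (g α y * C (e p) (e q) (e r) (e s)) * C (f p) (f q) (f r) (f s)
      = g α y * ∑ p, ∑ q, ∑ r, ∑ s, C (e p) (e q) (e r) (e s) * C (f p) (f q) (f r) (f s) := by
  simp only [mul_assoc, ← Finset.mul_sum]

lemma aux_L2 (hgsymm : ∀ x y : V, g x y = g y x)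
    (hgnd : ∀ x : V, (∀ y : V, g x y = 0) → x = 0)
    (hdual : ∀ i j, g (e i) (f j) = if i = j then (1 : ℝ) else 0)
    (hasf : ∀ x y z w : V, C x y z w = - C y x z w)
    (y α : V) :
    ∑ p, ∑ q, ∑ r, ∑ s, (g α (e p) * C (e q) y (e r) (e s)) * C (f p) (f q) (f r) (f s)
      = -∑ q, ∑ r, ∑ s, C y (e q) (e r) (e s) * C α (f q) (f r) (f s) := by
  have hcf := aux_contract_f g e f hgsymm hgnd hdual
  calc ∑ p, ∑ q, ∑ r, ∑ s, (g α (e p) * C (e q) y (e r) (e s)) * C (f p) (f q) (f r) (f s)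
      = ∑ q, ∑ r, ∑ s, ∑ p, (g α (e p) * C (e q) y (e r) (e s)) * C (f p) (f q) (f r) (f s) :=
        sum4_rot _
    _ = ∑ q, ∑ r, ∑ s, C (e q) y (e r) (e s) * C α (f q) (f r) (f s) := by
        refine Finset.sum_congr rfl fun q _ => Finset.sum_congr rfl fun r _ =>
          Finset.sum_congr rfl fun s _ => ?_
        calc ∑ p, (g α (e p) * C (e q) y (e r) (e s)) * C (f p) (f q) (f r) (f s)
            = C (e q) y (e r) (e s) * ∑ p, g α (e p) * C (f p) (f q) (f r) (f s) := by
              rw [Finset.mul_sum]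
              exact Finset.sum_congr rfl fun p _ => by ring
          _ = C (e q) y (e r) (e s) * C α (f q) (f r) (f s) := by
              congr 1
              simpa only [LinearMap.flip_apply] using
                hcf (((C.flip (f q)).flip (f r)).flip (f s)) α
    _ = -∑ q, ∑ r, ∑ s, C y (e q) (e r) (e s) * C α (f q) (f r) (f s) := by
        rw [← Finset.sum_neg_distrib]
        refine Finset.sum_congr rfl fun q _ => ?_
        rw [← Finset.sum_neg_distrib]
        refine Finset.sum_congr rfl fun r _ => ?_
        rw [← Finset.sum_neg_distrib]
        refine Finset.sum_congr rfl fun s _ => ?_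
        rw [hasf (e q) y (e r) (e s)]; ring

lemma aux_L3 (hgsymm : ∀ x y : V, g x y = g y x)
    (hgnd : ∀ x : V, (∀ y : V, g x y = 0) → x = 0)
    (hdual : ∀ i j, g (e i) (f j) = if i = j then (1 : ℝ) else 0)
    (hasf : ∀ x y z w : V, C x y z w = - C y x z w)
    (y α : V) :
    ∑ p, ∑ q, ∑ r, ∑ s, (g α (e q) * C y (e p) (e r) (e s)) * C (f p) (f q) (f r) (f s)
      = -∑ q, ∑ r, ∑ s, C y (e q) (e r) (e s) * C α (f q) (f r) (f s) := by
  have hcf := aux_contract_f g e f hgsymm hgnd hdual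
  calc ∑ p, ∑ q, ∑ r, ∑ s, (g α (e q) * C y (e p) (e r) (e s)) * C (f p) (f q) (f r) (f s)
      = ∑ p, ∑ r, ∑ s, ∑ q, (g α (e q) * C y (e p) (e r) (e s)) * C (f p) (f q) (f r) (f s) :=
        Finset.sum_congr rfl fun p _ => sum3_rot _
    _ = ∑ p, ∑ r, ∑ s, C y (e p) (e r) (e s) * C (f p) α (f r) (f s) := by
        refine Finset.sum_congr rfl fun p _ => Finset.sum_congr rfl fun r _ =>
          Finset.sum_congr rfl fun s _ => ?_
        calc ∑ q, (g α (e q) * C y (e p) (e r) (e s)) * C (f p) (f q) (f r) (f s)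
            = C y (e p) (e r) (e s) * ∑ q, g α (e q) * C (f p) (f q) (f r) (f s) := by
              rw [Finset.mul_sum]
              exact Finset.sum_congr rfl fun q _ => by ring
          _ = C y (e p) (e r) (e s) * C (f p) α (f r) (f s) := by
              congr 1
              simpa only [LinearMap.flip_apply] using
                hcf (((C (f p)).flip (f r)).flip (f s)) α
    _ = -∑ q, ∑ r, ∑ s, C y (e q) (e r) (e s) * C α (f q) (f r) (f s) := by
        rw [← Finset.sum_neg_distrib]
        refine Finset.sum_congr rfl fun p _ => ?_
        rw [← Finset.sum_neg_distrib]
        refine Finset.sum_congr rfl fun r _ => ?_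
        rw [← Finset.sum_neg_distrib]
        refine Finset.sum_congr rfl fun s _ => ?_
        rw [hasf (f p) α (f r) (f s)]; ring

lemma aux_R1 (hgsymm : ∀ x y : V, g x y = g y x)
    (hgnd : ∀ x : V, (∀ y : V, g x y = 0) → x = 0)
    (hdual : ∀ i j, g (e i) (f j) = if i = j then (1 : ℝ) else 0)
    (htr' : ∀ y z : V, ∑ i, C (f i) y z (e i) = 0)
    (y α : V) :
    ∑ p, ∑ q, ∑ r, ∑ s, (g (e p) (e s) * C (e q) y (e r) α) * C (f p) (f q) (f r) (f s)
      = 0 := by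
  have hcf := aux_contract_f g e f hgsymm hgnd hdual
  calc ∑ p, ∑ q, ∑ r, ∑ s, (g (e p) (e s) * C (e q) y (e r) α) * C (f p) (f q) (f r) (f s)
      = ∑ p, ∑ q, ∑ r, C (e q) y (e r) α * C (f p) (f q) (f r) (e p) := by
        refine Finset.sum_congr rfl fun p _ => Finset.sum_congr rfl fun q _ =>
          Finset.sum_congr rfl fun r _ => ?_
        calc ∑ s, (g (e p) (e s) * C (e q) y (e r) α) * C (f p) (f q) (f r) (f s)
            = C (e q) y (e r) α * ∑ s, g (e p) (e s) * C (f p) (f q) (f r) (f s) := by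
              rw [Finset.mul_sum]
              exact Finset.sum_congr rfl fun s _ => by ring
          _ = C (e q) y (e r) α * C (f p) (f q) (f r) (e p) := by
              rw [hcf (C (f p) (f q) (f r)) (e p)]
    _ = ∑ q, ∑ r, ∑ p, C (e q) y (e r) α * C (f p) (f q) (f r) (e p) := sum3_rot _
    _ = 0 := by
        refine Finset.sum_eq_zero fun q _ => Finset.sum_eq_zero fun r _ => ?_
        rw [← Finset.mul_sum, htr' (f q) (f r), mul_zero]

lemma aux_R2 (hgsymm : ∀ x y : V, g x y = g y x)
    (hgnd : ∀ x : V, (∀ y : V, g x y = 0) → x = 0)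
    (hdual : ∀ i j, g (e i) (f j) = if i = j then (1 : ℝ) else 0)
    (hasf : ∀ x y z w : V, C x y z w = - C y x z w)
    (htr' : ∀ y z : V, ∑ i, C (f i) y z (e i) = 0)
    (y α : V) :
    ∑ p, ∑ q, ∑ r, ∑ s, (g (e q) (e s) * C y (e p) (e r) α) * C (f p) (f q) (f r) (f s)
      = 0 := by
  have hcf := aux_contract_f g e f hgsymm hgnd hdual
  calc ∑ p, ∑ q, ∑ r, ∑ s, (g (e q) (e s) * C y (e p) (e r) α) * C (f p) (f q) (f r) (f s)
      = ∑ p, ∑ q, ∑ r, C y (e p) (e r) α * C (f p) (f q) (f r) (e q) := by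
        refine Finset.sum_congr rfl fun p _ => Finset.sum_congr rfl fun q _ =>
          Finset.sum_congr rfl fun r _ => ?_
        calc ∑ s, (g (e q) (e s) * C y (e p) (e r) α) * C (f p) (f q) (f r) (f s)
            = C y (e p) (e r) α * ∑ s, g (e q) (e s) * C (f p) (f q) (f r) (f s) := by
              rw [Finset.mul_sum]
              exact Finset.sum_congr rfl fun s _ => by ring
          _ = C y (e p) (e r) α * C (f p) (f q) (f r) (e q) := by
              rw [hcf (C (f p) (f q) (f r)) (e q)]
    _ = 0 := by
        refine Finset.sum_eq_zero fun p _ => ?_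
        rw [Finset.sum_comm]
        refine Finset.sum_eq_zero fun r _ => ?_
        rw [← Finset.mul_sum]
        have hz : ∑ q, C (f p) (f q) (f r) (e q) = 0 := by
          have : ∀ q : ι, C (f p) (f q) (f r) (e q) = -C (f q) (f p) (f r) (e q) :=
            fun q => hasf _ _ _ _
          rw [Finset.sum_congr rfl fun q _ => this q, Finset.sum_neg_distrib,
            htr' (f p) (f r), neg_zero]
        rw [hz, mul_zero]

lemma aux_R3 (hgsymm : ∀ x y : V, g x y = g y x)
    (hgnd : ∀ x : V, (∀ y : V, g x y = 0) → x = 0)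
    (hdual : ∀ i j, g (e i) (f j) = if i = j then (1 : ℝ) else 0)
    (hasf : ∀ x y z w : V, C x y z w = - C y x z w)
    (hps : ∀ x y z w : V, C x y z w = C z w x y)
    (y α : V) :
    ∑ p, ∑ q, ∑ r, ∑ s, (g y (e s) * C (e p) (e q) (e r) α) * C (f p) (f q) (f r) (f s)
      = ∑ q, ∑ r, ∑ s, C α (e q) (e r) (e s) * C y (f q) (f r) (f s) := by
  have hcf := aux_contract_f g e f hgsymm hgnd hdual
  calc ∑ p, ∑ q, ∑ r, ∑ s, (g y (e s) * C (e p) (e q) (e r) α) * C (f p) (f q) (f r) (f s)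
      = ∑ p, ∑ q, ∑ r, C (e p) (e q) (e r) α * C (f p) (f q) (f r) y := by
        refine Finset.sum_congr rfl fun p _ => Finset.sum_congr rfl fun q _ =>
          Finset.sum_congr rfl fun r _ => ?_
        calc ∑ s, (g y (e s) * C (e p) (e q) (e r) α) * C (f p) (f q) (f r) (f s)
            = C (e p) (e q) (e r) α * ∑ s, g y (e s) * C (f p) (f q) (f r) (f s) := by
              rw [Finset.mul_sum]
              exact Finset.sum_congr rfl fun s _ => by ring
          _ = C (e p) (e q) (e r) α * C (f p) (f q) (f r) y := by
              rw [hcf (C (f p) (f q) (f r)) y]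
    _ = ∑ p, ∑ q, ∑ r, C α (e r) (e p) (e q) * C y (f r) (f p) (f q) := by
        refine Finset.sum_congr rfl fun p _ => Finset.sum_congr rfl fun q _ =>
          Finset.sum_congr rfl fun r _ => ?_
        rw [hps (e p) (e q) (e r) α, hasf (e r) α (e p) (e q),
          hps (f p) (f q) (f r) y, hasf (f r) y (f p) (f q)]
        ring
    _ = ∑ q, ∑ r, ∑ s, C α (e q) (e r) (e s) * C y (f q) (f r) (f s) :=
        (sum3_rot (fun i j k => C α (e i) (e j) (e k) * C y (f i) (f j) (f k))).symm

lemma aux_R4 (hgsymm : ∀ x y : V, g x y = g y x)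
    (hgnd : ∀ x : V, (∀ y : V, g x y = 0) → x = 0)
    (hdual : ∀ i j, g (e i) (f j) = if i = j then (1 : ℝ) else 0)
    (hasf : ∀ x y z w : V, C x y z w = - C y x z w)
    (hass : ∀ x y z w : V, C x y z w = - C x y w z)
    (htr' : ∀ y z : V, ∑ i, C (f i) y z (e i) = 0)
    (y α : V) :
    ∑ p, ∑ q, ∑ r, ∑ s, (g (e q) (e r) * C (e p) y (e s) α) * C (f p) (f q) (f r) (f s)
      = 0 := by
  have hcf := aux_contract_f g e f hgsymm hgnd hdual
  calc ∑ p, ∑ q, ∑ r, ∑ s, (g (e q) (e r) * C (e p) y (e s) α) * C (f p) (f q) (f r) (f s)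
      = ∑ p, ∑ q, ∑ s, C (e p) y (e s) α * C (f p) (f q) (e q) (f s) := by
        refine Finset.sum_congr rfl fun p _ => Finset.sum_congr rfl fun q _ => ?_
        rw [Finset.sum_comm]
        refine Finset.sum_congr rfl fun s _ => ?_
        calc ∑ r, (g (e q) (e r) * C (e p) y (e s) α) * C (f p) (f q) (f r) (f s)
            = C (e p) y (e s) α * ∑ r, g (e q) (e r) * C (f p) (f q) (f r) (f s) := by
              rw [Finset.mul_sum]
              exact Finset.sum_congr rfl fun r _ => by ring
          _ = C (e p) y (e s) α * C (f p) (f q) (e q) (f s) := by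
              congr 1
              simpa only [LinearMap.flip_apply] using hcf ((C (f p) (f q)).flip (f s)) (e q)
    _ = 0 := by
        refine Finset.sum_eq_zero fun p _ => ?_
        rw [Finset.sum_comm]
        refine Finset.sum_eq_zero fun s _ => ?_
        rw [← Finset.mul_sum]
        have hz : ∑ q, C (f p) (f q) (e q) (f s) = 0 := by
          have h1 : ∀ q : ι, C (f p) (f q) (e q) (f s) = C (f q) (f p) (f s) (e q) := by
            intro q
            rw [hass (f p) (f q) (e q) (f s), hasf (f p) (f q) (f s) (e q)]
            ring
          rw [Finset.sum_congr rfl fun q _ => h1 q, htr' (f p) (f s)]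
        rw [hz, mul_zero]

lemma aux_R5 (hgsymm : ∀ x y : V, g x y = g y x)
    (hgnd : ∀ x : V, (∀ y : V, g x y = 0) → x = 0)
    (hdual : ∀ i j, g (e i) (f j) = if i = j then (1 : ℝ) else 0)
    (hasf : ∀ x y z w : V, C x y z w = - C y x z w)
    (hass : ∀ x y z w : V, C x y z w = - C x y w z)
    (hps : ∀ x y z w : V, C x y z w = C z w x y)
    (y α : V) :
    ∑ p, ∑ q, ∑ r, ∑ s, (g y (e r) * C (e q) (e p) (e s) α) * C (f p) (f q) (f r) (f s)
      = ∑ q, ∑ r, ∑ s, C α (e q) (e r) (e s) * C y (f q) (f r) (f s) := by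
  have hcf := aux_contract_f g e f hgsymm hgnd hdual
  calc ∑ p, ∑ q, ∑ r, ∑ s, (g y (e r) * C (e q) (e p) (e s) α) * C (f p) (f q) (f r) (f s)
      = ∑ p, ∑ q, ∑ s, C (e q) (e p) (e s) α * C (f p) (f q) y (f s) := by
        refine Finset.sum_congr rfl fun p _ => Finset.sum_congr rfl fun q _ => ?_
        rw [Finset.sum_comm]
        refine Finset.sum_congr rfl fun s _ => ?_
        calc ∑ r, (g y (e r) * C (e q) (e p) (e s) α) * C (f p) (f q) (f r) (f s)
            = C (e q) (e p) (e s) α * ∑ r, g y (e r) * C (f p) (f q) (f r) (f s) := by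
              rw [Finset.mul_sum]
              exact Finset.sum_congr rfl fun r _ => by ring
          _ = C (e q) (e p) (e s) α * C (f p) (f q) y (f s) := by
              congr 1
              simpa only [LinearMap.flip_apply] using hcf ((C (f p) (f q)).flip (f s)) y
    _ = ∑ p, ∑ q, ∑ s, C α (e s) (e p) (e q) * C y (f s) (f p) (f q) := by
        refine Finset.sum_congr rfl fun p _ => Finset.sum_congr rfl fun q _ =>
          Finset.sum_congr rfl fun s _ => ?_
        rw [hasf (e q) (e p) (e s) α, hps (e p) (e q) (e s) α, hasf (e s) α (e p) (e q),
          hass (f p) (f q) y (f s), hps (f p) (f q) (f s) y, hasf (f s) y (f p) (f q)]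
        ring
    _ = ∑ q, ∑ r, ∑ s, C α (e q) (e r) (e s) * C y (f q) (f r) (f s) :=
        (sum3_rot (fun i j k => C α (e i) (e j) (e k) * C y (f i) (f j) (f k))).symm

lemma aux_R6 (hgsymm : ∀ x y : V, g x y = g y x)
    (hgnd : ∀ x : V, (∀ y : V, g x y = 0) → x = 0)
    (hdual : ∀ i j, g (e i) (f j) = if i = j then (1 : ℝ) else 0)
    (hass : ∀ x y z w : V, C x y z w = - C x y w z)
    (htr' : ∀ y z : V, ∑ i, C (f i) y z (e i) = 0)
    (y α : V) :
    ∑ p, ∑ q, ∑ r, ∑ s, (g (e p) (e r) * C y (e q) (e s) α) * C (f p) (f q) (f r) (f s)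
      = 0 := by
  have hcf := aux_contract_f g e f hgsymm hgnd hdual
  calc ∑ p, ∑ q, ∑ r, ∑ s, (g (e p) (e r) * C y (e q) (e s) α) * C (f p) (f q) (f r) (f s)
      = ∑ p, ∑ q, ∑ s, C y (e q) (e s) α * C (f p) (f q) (e p) (f s) := by
        refine Finset.sum_congr rfl fun p _ => Finset.sum_congr rfl fun q _ => ?_
        rw [Finset.sum_comm]
        refine Finset.sum_congr rfl fun s _ => ?_
        calc ∑ r, (g (e p) (e r) * C y (e q) (e s) α) * C (f p) (f q) (f r) (f s)
            = C y (e q) (e s) α * ∑ r, g (e p) (e r) * C (f p) (f q) (f r) (f s) := by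
              rw [Finset.mul_sum]
              exact Finset.sum_congr rfl fun r _ => by ring
          _ = C y (e q) (e s) α * C (f p) (f q) (e p) (f s) := by
              congr 1
              simpa only [LinearMap.flip_apply] using hcf ((C (f p) (f q)).flip (f s)) (e p)
    _ = ∑ q, ∑ s, ∑ p, C y (e q) (e s) α * C (f p) (f q) (e p) (f s) := sum3_rot _
    _ = 0 := by
        refine Finset.sum_eq_zero fun q _ => Finset.sum_eq_zero fun s _ => ?_
        rw [← Finset.mul_sum]
        have hz : ∑ p, C (f p) (f q) (e p) (f s) = 0 := by
          have h1 : ∀ p : ι, C (f p) (f q) (e p) (f s) = -C (f p) (f q) (f s) (e p) :=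
            fun p => hass _ _ _ _
          rw [Finset.sum_congr rfl fun p _ => h1 p, Finset.sum_neg_distrib,
            htr' (f q) (f s), neg_zero]
        rw [hz, mul_zero]
end


set_option maxHeartbeats 1000000 in
/-- If `C² ≠ 0`, the recurrence vector `α` is an eigenvector of
the bilinear form `h(x,y) = (1/C²)·Σ C(x,e_q,e_r,e_s)·C(y,f_q,f_r,f_s)` with
eigenvalue `(n−3)/(2(n−2))`. -/
theorem recurrence_vector_eigenvector_of_h
    (V : Type) [AddCommGroup V] [Module ℝ V] [FiniteDimensional ℝ V]
    (n : ℕ) (hn : 5 ≤ n) (hdim : Module.finrank ℝ V = n)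
    (g : V →ₗ[ℝ] V →ₗ[ℝ] ℝ)
    (hgsymm : ∀ x y : V, g x y = g y x)
    (hgnd : ∀ x : V, (∀ y : V, g x y = 0) → x = 0)
    (C : V →ₗ[ℝ] V →ₗ[ℝ] V →ₗ[ℝ] V →ₗ[ℝ] ℝ)
    (hC : IsWeylTensor V g C)
    (α : V) (hrec : ConfRecVec n V g C α) :
    ∀ (ι : Type) [Fintype ι] [DecidableEq ι] (e : Module.Basis ι ℝ V) (f : ι → V),
      (∀ i j, g (e i) (f j) = if i = j then (1 : ℝ) else 0) →
      (∑ p, ∑ q, ∑ r, ∑ s, C (e p) (e q) (e r) (e s) * C (f p) (f q) (f r) (f s)) ≠ 0 →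
      ∀ y : V,
        (1 / ∑ p, ∑ q, ∑ r, ∑ s, C (e p) (e q) (e r) (e s) * C (f p) (f q) (f r) (f s)) *
            (∑ q, ∑ r, ∑ s, C α (e q) (e r) (e s) * C y (f q) (f r) (f s)) =
          (((n : ℝ) - 3) / (2 * ((n : ℝ) - 2))) * g α y := by
  intro ι _ _ e f hdual hC2 y
  have htr' := aux_tr' g e f C hgsymm hdual (hC.traceless ι e f hdual)
  have hasf := hC.antisym_fst
  have hass := hC.antisym_snd
  have hps := hC.pair_symm
  -- the contracted recurrence identity
  have hsum :
      ∑ p, ∑ q, ∑ r, ∑ s,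
        (g α y * C (e p) (e q) (e r) (e s) + g α (e p) * C (e q) y (e r) (e s) +
          g α (e q) * C y (e p) (e r) (e s)) * C (f p) (f q) (f r) (f s)
      = ∑ p, ∑ q, ∑ r, ∑ s,
        ((1 / ((n : ℝ) - 3)) *
          (g (e p) (e s) * C (e q) y (e r) α + g (e q) (e s) * C y (e p) (e r) α +
            g y (e s) * C (e p) (e q) (e r) α + g (e q) (e r) * C (e p) y (e s) α +
            g y (e r) * C (e q) (e p) (e s) α + g (e p) (e r) * C y (e q) (e s) α)) *
          C (f p) (f q) (f r) (f s) := by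
    refine Finset.sum_congr rfl fun p _ => Finset.sum_congr rfl fun q _ =>
      Finset.sum_congr rfl fun r _ => Finset.sum_congr rfl fun s _ => ?_
    rw [hrec y (e p) (e q) (e r) (e s)]
  have hL :
      ∑ p, ∑ q, ∑ r, ∑ s,
        (g α y * C (e p) (e q) (e r) (e s) + g α (e p) * C (e q) y (e r) (e s) +
          g α (e q) * C y (e p) (e r) (e s)) * C (f p) (f q) (f r) (f s)
      = g α y * (∑ p, ∑ q, ∑ r, ∑ s, C (e p) (e q) (e r) (e s) * C (f p) (f q) (f r) (f s))
        - (∑ q, ∑ r, ∑ s, C y (e q) (e r) (e s) * C α (f q) (f r) (f s))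
        - (∑ q, ∑ r, ∑ s, C y (e q) (e r) (e s) * C α (f q) (f r) (f s)) := by
    simp only [add_mul, Finset.sum_add_distrib]
    rw [aux_L1 g e f C y α, aux_L2 g e f C hgsymm hgnd hdual hasf y α,
      aux_L3 g e f C hgsymm hgnd hdual hasf y α]
    ring
  have hR :
      ∑ p, ∑ q, ∑ r, ∑ s,
        ((1 / ((n : ℝ) - 3)) *
          (g (e p) (e s) * C (e q) y (e r) α + g (e q) (e s) * C y (e p) (e r) α +
            g y (e s) * C (e p) (e q) (e r) α + g (e q) (e r) * C (e p) y (e s) α +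
            g y (e r) * C (e q) (e p) (e s) α + g (e p) (e r) * C y (e q) (e s) α)) *
          C (f p) (f q) (f r) (f s)
      = (1 / ((n : ℝ) - 3)) *
          (2 * ∑ q, ∑ r, ∑ s, C α (e q) (e r) (e s) * C y (f q) (f r) (f s)) := by
    calc ∑ p, ∑ q, ∑ r, ∑ s,
        ((1 / ((n : ℝ) - 3)) *
          (g (e p) (e s) * C (e q) y (e r) α + g (e q) (e s) * C y (e p) (e r) α +
            g y (e s) * C (e p) (e q) (e r) α + g (e q) (e r) * C (e p) y (e s) α +
            g y (e r) * C (e q) (e p) (e s) α + g (e p) (e r) * C y (e q) (e s) α)) *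
          C (f p) (f q) (f r) (f s)
        = (1 / ((n : ℝ) - 3)) * ∑ p, ∑ q, ∑ r, ∑ s,
            (g (e p) (e s) * C (e q) y (e r) α + g (e q) (e s) * C y (e p) (e r) α +
              g y (e s) * C (e p) (e q) (e r) α + g (e q) (e r) * C (e p) y (e s) α +
              g y (e r) * C (e q) (e p) (e s) α + g (e p) (e r) * C y (e q) (e s) α) *
            C (f p) (f q) (f r) (f s) := by
          simp only [mul_assoc, ← Finset.mul_sum]
      _ = (1 / ((n : ℝ) - 3)) *
          ((∑ p, ∑ q, ∑ r, ∑ s, (g (e p) (e s) * C (e q) y (e r) α) * C (f p) (f q) (f r) (f s)) +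
           (∑ p, ∑ q, ∑ r, ∑ s, (g (e q) (e s) * C y (e p) (e r) α) * C (f p) (f q) (f r) (f s)) +
           (∑ p, ∑ q, ∑ r, ∑ s, (g y (e s) * C (e p) (e q) (e r) α) * C (f p) (f q) (f r) (f s)) +
           (∑ p, ∑ q, ∑ r, ∑ s, (g (e q) (e r) * C (e p) y (e s) α) * C (f p) (f q) (f r) (f s)) +
           (∑ p, ∑ q, ∑ r, ∑ s, (g y (e r) * C (e q) (e p) (e s) α) * C (f p) (f q) (f r) (f s)) +
           (∑ p, ∑ q, ∑ r, ∑ s, (g (e p) (e r) * C y (e q) (e s) α) * C (f p) (f q) (f r) (f s))) := by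
          simp only [add_mul, Finset.sum_add_distrib]
      _ = (1 / ((n : ℝ) - 3)) *
          (2 * ∑ q, ∑ r, ∑ s, C α (e q) (e r) (e s) * C y (f q) (f r) (f s)) := by
          rw [aux_R1 g e f C hgsymm hgnd hdual htr' y α,
            aux_R2 g e f C hgsymm hgnd hdual hasf htr' y α,
            aux_R3 g e f C hgsymm hgnd hdual hasf hps y α,
            aux_R4 g e f C hgsymm hgnd hdual hasf hass htr' y α,
            aux_R5 g e f C hgsymm hgnd hdual hasf hass hps y α,
            aux_R6 g e f C hgsymm hgnd hdual hass htr' y α]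
          ring
  rw [hL, hR] at hsum
  rw [aux_Dsym g e f C hgsymm hgnd hdual y α] at hsum
  have h5 : (5 : ℝ) ≤ (n : ℝ) := by exact_mod_cast hn
  have hn3 : ((n : ℝ) - 3) ≠ 0 := by intro h; linarith
  have hn2 : (2 * ((n : ℝ) - 2)) ≠ 0 := by intro h; linarith
  have hn2' : ((n : ℝ) - 2) ≠ 0 := by intro h; linarith
  field_simp at hsum ⊢
  linear_combination (-1 : ℝ) * hsum
end

section
/- Let C be a Weyl-type tensor on (V,g) with C² ≠ 0 and let α ∈ V satisfy the conformal recurrence identity. Then, in components with respect to any basis (indices raised and lowered with g and its inverse, repeated indices summed), the following identity holds for all free indices i, j, q: α_i·h_j{}^q − α_j·h_i{}^q = −(1/C²)·α^p·[ C_{jilm}·C_p{}^{qlm} + (2/(n−3))·( C_{iklp}·C^{qkl}{}_j − C_{jklp}·C^{qkl}{}_i ) ], where h_{ij} = C_{iklm}·C_j{}^{klm}/C² and C² = C_{jklm}·C^{jklm}. -/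
set_option maxHeartbeats 4000000 in
/-- the component identity
`α_i·h_j{}^q − α_j·h_i{}^q = −(1/C²)·α^p·[C_{jilm}C_p{}^{qlm}
  + (2/(n−3))(C_{iklp}C^{qkl}{}_j − C_{jklp}C^{qkl}{}_i)]`,
expressed with respect to a basis `(e_i)` with `g`-dual basis `(f_i)` (raised
indices correspond to slots evaluated on the dual basis, and contraction of a
raised index with `α_p`, i.e. `α^p C(...,e_p,...)`-type sums, is evaluation at `α`). -/
theorem h_tensor_component_identity
    (V : Type) [AddCommGroup V] [Module ℝ V] [FiniteDimensional ℝ V]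
    (n : ℕ) (hn : 5 ≤ n) (hdim : Module.finrank ℝ V = n)
    (g : V →ₗ[ℝ] V →ₗ[ℝ] ℝ)
    (hgsymm : ∀ x y : V, g x y = g y x)
    (hgnd : ∀ x : V, (∀ y : V, g x y = 0) → x = 0)
    (C : V →ₗ[ℝ] V →ₗ[ℝ] V →ₗ[ℝ] V →ₗ[ℝ] ℝ)
    (hC : IsWeylTensor V g C)
    (α : V) (hrec : ConfRecVec n V g C α) :
    ∀ (ι : Type) [Fintype ι] [DecidableEq ι] (e : Module.Basis ι ℝ V) (f : ι → V),
      (∀ i j, g (e i) (f j) = if i = j then (1 : ℝ) else 0) →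
      (∑ p, ∑ q, ∑ r, ∑ s, C (e p) (e q) (e r) (e s) * C (f p) (f q) (f r) (f s)) ≠ 0 →
      ∀ i j q : ι,
        g α (e i) *
            ((1 / ∑ p, ∑ q', ∑ r, ∑ s,
                C (e p) (e q') (e r) (e s) * C (f p) (f q') (f r) (f s)) *
              ∑ k, ∑ l, ∑ m, C (e j) (e k) (e l) (e m) * C (f q) (f k) (f l) (f m)) -
          g α (e j) *
            ((1 / ∑ p, ∑ q', ∑ r, ∑ s,
                C (e p) (e q') (e r) (e s) * C (f p) (f q') (f r) (f s)) *
              ∑ k, ∑ l, ∑ m, C (e i) (e k) (e l) (e m) * C (f q) (f k) (f l) (f m)) =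
        -(1 / ∑ p, ∑ q', ∑ r, ∑ s,
            C (e p) (e q') (e r) (e s) * C (f p) (f q') (f r) (f s)) *
          ((∑ l, ∑ m, C (e j) (e i) (e l) (e m) * C α (f q) (f l) (f m)) +
            (2 / ((n : ℝ) - 3)) *
              ((∑ k, ∑ l, C (e i) (e k) (e l) α * C (f q) (f k) (f l) (e j)) -
                (∑ k, ∑ l, C (e j) (e k) (e l) α * C (f q) (f k) (f l) (e i)))) := by
  intro ι _ _ e f hef _hC2 i j q
  -- Expansion of any vector in the dual basis
  have hexp : ∀ v : V, (∑ k, g (e k) v • f k) = v := by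
    intro v
    have hr : ∀ r : ι, g (e r) (v - ∑ k, g (e k) v • f k) = 0 := by
      intro r
      rw [map_sub, map_sum]
      simp [map_smul, smul_eq_mul, hef]
    have hall : ∀ x : V, g x (v - ∑ k, g (e k) v • f k) = 0 := by
      intro x
      have hx := Module.Basis.sum_repr e x
      rw [← hx, map_sum, LinearMap.sum_apply]
      simp [map_smul, LinearMap.smul_apply, smul_eq_mul, hr]
    have h0 := hgnd (v - ∑ k, g (e k) v • f k) (fun y => by rw [hgsymm]; exact hall y)
    rw [sub_eq_zero] at h0
    exact h0.symm
  -- Contraction lemmas (one for each of slots 2,3,4)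
  have con4 : ∀ a b c v : V, (∑ k, g v (e k) * C a b c (f k)) = C a b c v := by
    intro a b c v
    have h2 : ∀ k : ι, g v (e k) * C a b c (f k) = C a b c (g (e k) v • f k) := by
      intro k
      rw [map_smul, smul_eq_mul, hgsymm v (e k)]
    rw [Finset.sum_congr rfl fun k _ => h2 k, ← map_sum, hexp]
  have con3 : ∀ a b c v : V, (∑ k, g v (e k) * C a b (f k) c) = C a b v c := by
    intro a b c v
    have h2 : ∀ k : ι, g v (e k) * C a b (f k) c = C a b (g (e k) v • f k) c := by
      intro k
      rw [map_smul, LinearMap.smul_apply, smul_eq_mul, hgsymm v (e k)]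
    rw [Finset.sum_congr rfl fun k _ => h2 k]
    rw [show (∑ k, C a b (g (e k) v • f k) c) = C a b (∑ k, g (e k) v • f k) c from by
      rw [map_sum, LinearMap.sum_apply]]
    rw [hexp]
  have con2 : ∀ a b c v : V, (∑ k, g v (e k) * C a (f k) b c) = C a v b c := by
    intro a b c v
    have h2 : ∀ k : ι, g v (e k) * C a (f k) b c = C a (g (e k) v • f k) b c := by
      intro k
      rw [map_smul, LinearMap.smul_apply, LinearMap.smul_apply, smul_eq_mul, hgsymm v (e k)]
    rw [Finset.sum_congr rfl fun k _ => h2 k]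
    rw [show (∑ k, C a (g (e k) v • f k) b c) = C a (∑ k, g (e k) v • f k) b c from by
      rw [map_sum, LinearMap.sum_apply, LinearMap.sum_apply]]
    rw [hexp]
  -- Trace lemmas
  have tr14 : ∀ y z : V, (∑ k, C (e k) y z (f k)) = 0 := hC.traceless ι e f hef
  have trB : ∀ x y : V, (∑ k, C x (f k) y (e k)) = 0 := by
    intro x y
    have h2 : ∀ k : ι, C x (f k) y (e k) = -C (e k) y x (f k) := by
      intro k
      rw [hC.pair_symm x (f k) y (e k), hC.antisym_fst y (e k) x (f k)]
    rw [Finset.sum_congr rfl fun k _ => h2 k, Finset.sum_neg_distrib, tr14, neg_zero]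
  have trD : ∀ x y : V, (∑ k, C x (f k) (e k) y) = 0 := by
    intro x y
    have h2 : ∀ k : ι, C x (f k) (e k) y = -C x (f k) y (e k) := by
      intro k
      rw [hC.antisym_snd x (f k) (e k) y]
    rw [Finset.sum_congr rfl fun k _ => h2 k, Finset.sum_neg_distrib, trB, neg_zero]
  -- The contracted recurrence identity
  have hsum :
      (∑ k, ∑ l, ∑ m,
        (g α (e i) * C (e j) (e k) (e l) (e m) + g α (e j) * C (e k) (e i) (e l) (e m) +
          g α (e k) * C (e i) (e j) (e l) (e m)) * C (f q) (f k) (f l) (f m)) =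
      ∑ k, ∑ l, ∑ m,
        ((1 / ((n : ℝ) - 3)) *
          (g (e j) (e m) * C (e k) (e i) (e l) α + g (e k) (e m) * C (e i) (e j) (e l) α +
            g (e i) (e m) * C (e j) (e k) (e l) α + g (e k) (e l) * C (e j) (e i) (e m) α +
            g (e i) (e l) * C (e k) (e j) (e m) α + g (e j) (e l) * C (e i) (e k) (e m) α)) *
          C (f q) (f k) (f l) (f m) := by
    refine Finset.sum_congr rfl fun k _ => Finset.sum_congr rfl fun l _ =>
      Finset.sum_congr rfl fun m _ => ?_
    rw [hrec (e i) (e j) (e k) (e l) (e m)]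
  -- Split the left-hand side
  have eLHS :
      (∑ k, ∑ l, ∑ m,
        (g α (e i) * C (e j) (e k) (e l) (e m) + g α (e j) * C (e k) (e i) (e l) (e m) +
          g α (e k) * C (e i) (e j) (e l) (e m)) * C (f q) (f k) (f l) (f m)) =
      (∑ k, ∑ l, ∑ m, (g α (e i) * C (e j) (e k) (e l) (e m)) * C (f q) (f k) (f l) (f m)) +
      (∑ k, ∑ l, ∑ m, (g α (e j) * C (e k) (e i) (e l) (e m)) * C (f q) (f k) (f l) (f m)) +
      (∑ k, ∑ l, ∑ m, (g α (e k) * C (e i) (e j) (e l) (e m)) * C (f q) (f k) (f l) (f m)) := by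
    simp only [add_mul, Finset.sum_add_distrib]
  -- Split the right-hand side
  have hsplit : ∀ k l m : ι,
      ((1 / ((n : ℝ) - 3)) *
        (g (e j) (e m) * C (e k) (e i) (e l) α + g (e k) (e m) * C (e i) (e j) (e l) α +
          g (e i) (e m) * C (e j) (e k) (e l) α + g (e k) (e l) * C (e j) (e i) (e m) α +
          g (e i) (e l) * C (e k) (e j) (e m) α + g (e j) (e l) * C (e i) (e k) (e m) α)) *
        C (f q) (f k) (f l) (f m) =
      (1 / ((n : ℝ) - 3)) *
        ((g (e j) (e m) * C (e k) (e i) (e l) α) * C (f q) (f k) (f l) (f m) +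
          (g (e k) (e m) * C (e i) (e j) (e l) α) * C (f q) (f k) (f l) (f m) +
          (g (e i) (e m) * C (e j) (e k) (e l) α) * C (f q) (f k) (f l) (f m) +
          (g (e k) (e l) * C (e j) (e i) (e m) α) * C (f q) (f k) (f l) (f m) +
          (g (e i) (e l) * C (e k) (e j) (e m) α) * C (f q) (f k) (f l) (f m) +
          (g (e j) (e l) * C (e i) (e k) (e m) α) * C (f q) (f k) (f l) (f m)) := by
    intro k l m; ring
  have eRHS :
      (∑ k, ∑ l, ∑ m,
        ((1 / ((n : ℝ) - 3)) *
          (g (e j) (e m) * C (e k) (e i) (e l) α + g (e k) (e m) * C (e i) (e j) (e l) α +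
            g (e i) (e m) * C (e j) (e k) (e l) α + g (e k) (e l) * C (e j) (e i) (e m) α +
            g (e i) (e l) * C (e k) (e j) (e m) α + g (e j) (e l) * C (e i) (e k) (e m) α)) *
          C (f q) (f k) (f l) (f m)) =
      (1 / ((n : ℝ) - 3)) *
        ((∑ k, ∑ l, ∑ m, (g (e j) (e m) * C (e k) (e i) (e l) α) * C (f q) (f k) (f l) (f m)) +
          (∑ k, ∑ l, ∑ m, (g (e k) (e m) * C (e i) (e j) (e l) α) * C (f q) (f k) (f l) (f m)) +
          (∑ k, ∑ l, ∑ m, (g (e i) (e m) * C (e j) (e k) (e l) α) * C (f q) (f k) (f l) (f m)) +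
          (∑ k, ∑ l, ∑ m, (g (e k) (e l) * C (e j) (e i) (e m) α) * C (f q) (f k) (f l) (f m)) +
          (∑ k, ∑ l, ∑ m, (g (e i) (e l) * C (e k) (e j) (e m) α) * C (f q) (f k) (f l) (f m)) +
          (∑ k, ∑ l, ∑ m, (g (e j) (e l) * C (e i) (e k) (e m) α) * C (f q) (f k) (f l) (f m))) := by
    simp only [hsplit, ← Finset.mul_sum, Finset.sum_add_distrib]
  -- The three left-hand pieces
  have hL1 : (∑ k, ∑ l, ∑ m, (g α (e i) * C (e j) (e k) (e l) (e m)) * C (f q) (f k) (f l) (f m))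
      = g α (e i) * ∑ k, ∑ l, ∑ m, C (e j) (e k) (e l) (e m) * C (f q) (f k) (f l) (f m) := by
    simp only [mul_assoc, ← Finset.mul_sum]
  have hL2 : (∑ k, ∑ l, ∑ m, (g α (e j) * C (e k) (e i) (e l) (e m)) * C (f q) (f k) (f l) (f m))
      = -(g α (e j) * ∑ k, ∑ l, ∑ m, C (e i) (e k) (e l) (e m) * C (f q) (f k) (f l) (f m)) := by
    have h2 : ∀ k l m : ι, (g α (e j) * C (e k) (e i) (e l) (e m)) * C (f q) (f k) (f l) (f m)
        = -(g α (e j) * (C (e i) (e k) (e l) (e m) * C (f q) (f k) (f l) (f m))) := by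
      intro k l m
      rw [hC.antisym_fst (e k) (e i) (e l) (e m)]
      ring
    simp only [h2, Finset.sum_neg_distrib, ← Finset.mul_sum]
  have hL3 : (∑ k, ∑ l, ∑ m, (g α (e k) * C (e i) (e j) (e l) (e m)) * C (f q) (f k) (f l) (f m))
      = ∑ l, ∑ m, C (e j) (e i) (e l) (e m) * C α (f q) (f l) (f m) := by
    have step1 : (∑ k, ∑ l, ∑ m, (g α (e k) * C (e i) (e j) (e l) (e m)) * C (f q) (f k) (f l) (f m))
        = ∑ l, ∑ m, ∑ k, (g α (e k) * C (e i) (e j) (e l) (e m)) * C (f q) (f k) (f l) (f m) :=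
      Finset.sum_comm.trans (Finset.sum_congr rfl fun l _ => Finset.sum_comm)
    rw [step1]
    refine Finset.sum_congr rfl fun l _ => Finset.sum_congr rfl fun m _ => ?_
    have h2 : ∀ k : ι, (g α (e k) * C (e i) (e j) (e l) (e m)) * C (f q) (f k) (f l) (f m)
        = C (e i) (e j) (e l) (e m) * (g α (e k) * C (f q) (f k) (f l) (f m)) := fun k => by ring
    rw [Finset.sum_congr rfl fun k _ => h2 k, ← Finset.mul_sum, con2 (f q) (f l) (f m) α,
      hC.antisym_fst (e i) (e j) (e l) (e m), hC.antisym_fst (f q) α (f l) (f m)]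
    ring
  -- The six right-hand pieces
  have hA : (∑ k, ∑ l, ∑ m, (g (e j) (e m) * C (e k) (e i) (e l) α) * C (f q) (f k) (f l) (f m))
      = -(∑ k, ∑ l, C (e i) (e k) (e l) α * C (f q) (f k) (f l) (e j)) := by
    have h1 : ∀ k l : ι,
        (∑ m, (g (e j) (e m) * C (e k) (e i) (e l) α) * C (f q) (f k) (f l) (f m))
        = -(C (e i) (e k) (e l) α * C (f q) (f k) (f l) (e j)) := by
      intro k l
      have h2 : ∀ m : ι, (g (e j) (e m) * C (e k) (e i) (e l) α) * C (f q) (f k) (f l) (f m)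
          = C (e k) (e i) (e l) α * (g (e j) (e m) * C (f q) (f k) (f l) (f m)) := fun m => by ring
      rw [Finset.sum_congr rfl fun m _ => h2 m, ← Finset.mul_sum, con4 (f q) (f k) (f l) (e j),
        hC.antisym_fst (e k) (e i) (e l) α]
      ring
    simp only [h1, Finset.sum_neg_distrib]
  have hB : (∑ k, ∑ l, ∑ m, (g (e k) (e m) * C (e i) (e j) (e l) α) * C (f q) (f k) (f l) (f m))
      = 0 := by
    have h1 : ∀ k l : ι,
        (∑ m, (g (e k) (e m) * C (e i) (e j) (e l) α) * C (f q) (f k) (f l) (f m))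
        = C (e i) (e j) (e l) α * C (f q) (f k) (f l) (e k) := by
      intro k l
      have h2 : ∀ m : ι, (g (e k) (e m) * C (e i) (e j) (e l) α) * C (f q) (f k) (f l) (f m)
          = C (e i) (e j) (e l) α * (g (e k) (e m) * C (f q) (f k) (f l) (f m)) := fun m => by ring
      rw [Finset.sum_congr rfl fun m _ => h2 m, ← Finset.mul_sum, con4 (f q) (f k) (f l) (e k)]
    simp only [h1]
    rw [Finset.sum_comm]
    refine Finset.sum_eq_zero fun l _ => ?_
    rw [← Finset.mul_sum, trB (f q) (f l), mul_zero]
  have hCc : (∑ k, ∑ l, ∑ m, (g (e i) (e m) * C (e j) (e k) (e l) α) * C (f q) (f k) (f l) (f m))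
      = ∑ k, ∑ l, C (e j) (e k) (e l) α * C (f q) (f k) (f l) (e i) := by
    refine Finset.sum_congr rfl fun k _ => Finset.sum_congr rfl fun l _ => ?_
    have h2 : ∀ m : ι, (g (e i) (e m) * C (e j) (e k) (e l) α) * C (f q) (f k) (f l) (f m)
        = C (e j) (e k) (e l) α * (g (e i) (e m) * C (f q) (f k) (f l) (f m)) := fun m => by ring
    rw [Finset.sum_congr rfl fun m _ => h2 m, ← Finset.mul_sum, con4 (f q) (f k) (f l) (e i)]
  have hD : (∑ k, ∑ l, ∑ m, (g (e k) (e l) * C (e j) (e i) (e m) α) * C (f q) (f k) (f l) (f m))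
      = 0 := by
    have step1 : ∀ k : ι,
        (∑ l, ∑ m, (g (e k) (e l) * C (e j) (e i) (e m) α) * C (f q) (f k) (f l) (f m))
        = ∑ m, C (e j) (e i) (e m) α * C (f q) (f k) (e k) (f m) := by
      intro k
      rw [Finset.sum_comm]
      refine Finset.sum_congr rfl fun m _ => ?_
      have h2 : ∀ l : ι, (g (e k) (e l) * C (e j) (e i) (e m) α) * C (f q) (f k) (f l) (f m)
          = C (e j) (e i) (e m) α * (g (e k) (e l) * C (f q) (f k) (f l) (f m)) := fun l => by ring
      rw [Finset.sum_congr rfl fun l _ => h2 l, ← Finset.mul_sum, con3 (f q) (f k) (f m) (e k)]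
    simp only [step1]
    rw [Finset.sum_comm]
    refine Finset.sum_eq_zero fun m _ => ?_
    rw [← Finset.mul_sum, trD (f q) (f m), mul_zero]
  have hE : (∑ k, ∑ l, ∑ m, (g (e i) (e l) * C (e k) (e j) (e m) α) * C (f q) (f k) (f l) (f m))
      = ∑ k, ∑ l, C (e j) (e k) (e l) α * C (f q) (f k) (f l) (e i) := by
    refine Finset.sum_congr rfl fun k _ => ?_
    rw [Finset.sum_comm]
    refine Finset.sum_congr rfl fun m _ => ?_
    have h2 : ∀ l : ι, (g (e i) (e l) * C (e k) (e j) (e m) α) * C (f q) (f k) (f l) (f m)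
        = C (e k) (e j) (e m) α * (g (e i) (e l) * C (f q) (f k) (f l) (f m)) := fun l => by ring
    rw [Finset.sum_congr rfl fun l _ => h2 l, ← Finset.mul_sum, con3 (f q) (f k) (f m) (e i),
      hC.antisym_fst (e k) (e j) (e m) α, hC.antisym_snd (f q) (f k) (e i) (f m)]
    ring
  have hF : (∑ k, ∑ l, ∑ m, (g (e j) (e l) * C (e i) (e k) (e m) α) * C (f q) (f k) (f l) (f m))
      = -(∑ k, ∑ l, C (e i) (e k) (e l) α * C (f q) (f k) (f l) (e j)) := by
    have h1 : ∀ k : ι,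
        (∑ l, ∑ m, (g (e j) (e l) * C (e i) (e k) (e m) α) * C (f q) (f k) (f l) (f m))
        = ∑ l, -(C (e i) (e k) (e l) α * C (f q) (f k) (f l) (e j)) := by
      intro k
      rw [Finset.sum_comm]
      refine Finset.sum_congr rfl fun m _ => ?_
      have h2 : ∀ l : ι, (g (e j) (e l) * C (e i) (e k) (e m) α) * C (f q) (f k) (f l) (f m)
          = C (e i) (e k) (e m) α * (g (e j) (e l) * C (f q) (f k) (f l) (f m)) := fun l => by ring
      rw [Finset.sum_congr rfl fun l _ => h2 l, ← Finset.mul_sum, con3 (f q) (f k) (f m) (e j),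
        hC.antisym_snd (f q) (f k) (e j) (f m)]
      ring
    simp only [h1, Finset.sum_neg_distrib]
  -- Combine everything
  have t := hsum
  rw [eLHS, eRHS, hL1, hL2, hL3, hA, hB, hCc, hD, hE, hF] at t
  set T : ℝ := ∑ p, ∑ q', ∑ r, ∑ s,
    C (e p) (e q') (e r) (e s) * C (f p) (f q') (f r) (f s) with hT
  set Sj : ℝ := ∑ k, ∑ l, ∑ m, C (e j) (e k) (e l) (e m) * C (f q) (f k) (f l) (f m) with hSj
  set Si : ℝ := ∑ k, ∑ l, ∑ m, C (e i) (e k) (e l) (e m) * C (f q) (f k) (f l) (f m) with hSi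
  set P : ℝ := ∑ l, ∑ m, C (e j) (e i) (e l) (e m) * C α (f q) (f l) (f m) with hP
  set T1 : ℝ := ∑ k, ∑ l, C (e i) (e k) (e l) α * C (f q) (f k) (f l) (e j) with hT1
  set T2 : ℝ := ∑ k, ∑ l, C (e j) (e k) (e l) α * C (f q) (f k) (f l) (e i) with hT2
  linear_combination (1 / T) * t
end

section
/- Let K be a curvature-type tensor on (V,g) and define its Ricci contraction Ric(x,y) = Σ_i K(f_i, x, y, e_i) for a basis (e_i) with g-dual basis (f_i) (independent of the choice of basis); Ric is a symmetric bilinear form with g-associated endomorphism Ric♯. If b is a symmetric bilinear form on V that is K-compatible, then b commutes with the Ricci contraction: b(x, Ric♯ y) = b(y, Ric♯ x) for all x, y ∈ V; equivalently, the g-associated endomorphisms of b and Ric commute. -/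
/-- a symmetric bilinear form `b` that is compatible with a
curvature-type tensor `K` commutes with the Ricci contraction of `K`. Here
`B` and `RicS` are the `g`-associated endomorphisms of `b` and of the Ricci
contraction `Ric(x,y) = Σ_i K(f_i,x,y,e_i)`. -/
theorem compatible_tensor_commutes_with_ricci
    (V : Type) [AddCommGroup V] [Module ℝ V] [FiniteDimensional ℝ V]
    (g : V →ₗ[ℝ] V →ₗ[ℝ] ℝ)
    (hgsymm : ∀ x y : V, g x y = g y x)
    (hgnd : ∀ x : V, (∀ y : V, g x y = 0) → x = 0)
    (K : V →ₗ[ℝ] V →ₗ[ℝ] V →ₗ[ℝ] V →ₗ[ℝ] ℝ)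
    (hK1 : ∀ x y z w : V, K x y z w = - K y x z w)
    (hK2 : ∀ x y z w : V, K x y z w = - K x y w z)
    (hK3 : ∀ x y z w : V, K x y z w = K z w x y)
    (ι : Type) [Fintype ι] [DecidableEq ι] (e : Module.Basis ι ℝ V) (f : ι → V)
    (hdual : ∀ i j, g (e i) (f j) = if i = j then (1 : ℝ) else 0)
    (b : V →ₗ[ℝ] V →ₗ[ℝ] ℝ)
    (hbsymm : ∀ x y : V, b x y = b y x)
    (B : V →ₗ[ℝ] V)
    (hB : ∀ x y : V, g (B x) y = b x y)
    (hcompat : ∀ x1 x2 x3 x4 : V,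
      K x2 x3 x4 (B x1) + K x3 x1 x4 (B x2) + K x1 x2 x4 (B x3) = 0)
    (RicS : V →ₗ[ℝ] V)
    (hRic : ∀ x y : V, g (RicS x) y = ∑ i, K (f i) x y (e i)) :
    (∀ x y : V, b x (RicS y) = b y (RicS x)) ∧ B ∘ₗ RicS = RicS ∘ₗ B := by
  classical
  -- expansion of any vector in the basis e with coefficients via f
  have hexp : ∀ v : V, ∑ i, g v (f i) • e i = v := by
    intro v
    have hrep : ∀ i, g v (f i) = e.repr v i := by
      intro i
      conv_lhs => rw [← e.sum_repr v]
      simp only [map_sum, LinearMap.sum_apply, map_smul, LinearMap.smul_apply,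
        smul_eq_mul, hdual]
      simp [Finset.sum_ite_eq]
    simp only [hrep]
    exact e.sum_repr v
  have hK4 : ∀ x y z w : V, K x y z w = K y x w z := by
    intro x y z w
    rw [hK1, hK2, neg_neg]
  -- swap-basis identity for the contraction
  have hswap : ∀ u v : V, ∑ i, K (e i) u v (f i) = ∑ i, K (f i) u v (e i) := by
    intro u v
    calc ∑ i, K (e i) u v (f i)
        = ∑ i, ∑ j, g (f i) (f j) * K (e i) u v (e j) := by
          refine Finset.sum_congr rfl fun i _ => ?_
          conv_lhs => rw [← hexp (f i)]
          simp [smul_eq_mul]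
      _ = ∑ j, ∑ i, g (f i) (f j) * K (e i) u v (e j) := Finset.sum_comm
      _ = ∑ j, K (f j) u v (e j) := by
          refine Finset.sum_congr rfl fun j _ => ?_
          conv_rhs => rw [← hexp (f j)]
          simp only [map_sum, LinearMap.sum_apply, map_smul, LinearMap.smul_apply,
            smul_eq_mul]
          refine Finset.sum_congr rfl fun i _ => ?_
          rw [hgsymm (f i) (f j)]
  -- symmetry of Ric
  have hRicsym : ∀ u v : V, ∑ i, K (f i) u v (e i) = ∑ i, K (f i) v u (e i) := by
    intro u v
    rw [← hswap v u]
    refine Finset.sum_congr rfl fun i _ => ?_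
    rw [hK3 (f i) u v (e i), hK4]
  -- expansion of B
  have hBf : ∀ v : V, B v = ∑ j, b v (f j) • e j := by
    intro v
    rw [← hexp (B v)]
    simp only [hB]
  -- vanishing of the middle term
  have hvan : ∀ x y : V, ∑ i, K y x (e i) (B (f i)) = 0 := by
    intro x y
    have hrw : ∀ i, K y x (e i) (B (f i))
        = ∑ j, b (f i) (f j) * K y x (e i) (e j) := by
      intro i
      rw [hBf (f i)]
      simp [smul_eq_mul]
    simp only [hrw]
    have hneg : (∑ i, ∑ j, b (f i) (f j) * K y x (e i) (e j))
        = -∑ i, ∑ j, b (f i) (f j) * K y x (e i) (e j) := by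
      conv_lhs => rw [Finset.sum_comm]
      rw [← Finset.sum_neg_distrib]
      refine Finset.sum_congr rfl fun i _ => ?_
      rw [← Finset.sum_neg_distrib]
      refine Finset.sum_congr rfl fun j _ => ?_
      rw [hbsymm (f j) (f i), hK2 y x (e j) (e i)]
      ring
    linarith
  -- main identity
  have hmain : ∀ x y : V, g (RicS y) (B x) = g (RicS x) (B y) := by
    intro x y
    have hsum : ∑ i, (K (f i) y (e i) (B x) + K y x (e i) (B (f i))
        + K x (f i) (e i) (B y)) = 0 := by
      simp only [hcompat, Finset.sum_const_zero]
    rw [Finset.sum_add_distrib, Finset.sum_add_distrib, hvan x y, add_zero] at hsum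
    have h1 : ∑ i, K (f i) y (e i) (B x) = -∑ i, K (f i) y (B x) (e i) := by
      rw [← Finset.sum_neg_distrib]
      exact Finset.sum_congr rfl fun i _ => hK2 _ _ _ _
    have h3 : ∑ i, K x (f i) (e i) (B y) = ∑ i, K (f i) x (B y) (e i) := by
      refine Finset.sum_congr rfl fun i _ => ?_
      rw [hK1 x (f i), hK2 (f i) x (e i) (B y), neg_neg]
    rw [h1, h3] at hsum
    rw [hRic, hRic]
    linarith
  have hpart1 : ∀ x y : V, b x (RicS y) = b y (RicS x) := by
    intro x y
    rw [← hB x, ← hB y, hgsymm (B x), hgsymm (B y), hmain]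
  refine ⟨hpart1, ?_⟩
  ext x
  simp only [LinearMap.comp_apply]
  have : ∀ y : V, g (B (RicS x) - RicS (B x)) y = 0 := by
    intro y
    have h1 : g (B (RicS x)) y = g (RicS (B x)) y := by
      rw [hB, hbsymm, ← hpart1 x y, ← hB x, hgsymm (B x), hRic y, hRic (B x),
        hRicsym y (B x)]
    simp [h1]
  have := hgnd _ this
  rw [sub_eq_zero] at this
  exact this
end

section
/- Let n ≥ 5, let V be an n-dimensional real vector space with a nondegenerate symmetric bilinear form g, let β ∈ V satisfy g(β,β) = 0, let A, B ∈ ℝ, and define the symmetric bilinear form h(x,y) = A·g(x,y) + B·g(β,x)·g(β,y). If the g-trace of h equals 1 (i.e. Σ_i h(e_i, f_i) = 1 for a basis (e_i) with g-dual basis (f_i)), then A = 1/n, and there exists no nonzero vector α ∈ V with h(α,y) = ((n−3)/(2(n−2)))·g(α,y) for all y ∈ V. -/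
/-- if `β` is `g`-null and `h = A·g + B·(g β)⊗(g β)` has
`g`-trace `1`, then `A = 1/n` and `h` has no nonzero eigenvector with
eigenvalue `(n−3)/(2(n−2))`. This is the algebraic core of the decomposability
of Lorentzian conformally recurrent manifolds with `C² ≠ 0`. -/
theorem no_eigenvector_for_null_form
    (V : Type) [AddCommGroup V] [Module ℝ V] [FiniteDimensional ℝ V]
    (n : ℕ) (hn : 5 ≤ n) (hdim : Module.finrank ℝ V = n)
    (g : V →ₗ[ℝ] V →ₗ[ℝ] ℝ)
    (hgsymm : ∀ x y : V, g x y = g y x)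
    (hgnd : ∀ x : V, (∀ y : V, g x y = 0) → x = 0)
    (β : V) (hβ : g β β = 0) (A B : ℝ)
    (ι : Type) [Fintype ι] [DecidableEq ι] (e : Module.Basis ι ℝ V) (f : ι → V)
    (hdual : ∀ i j, g (e i) (f j) = if i = j then (1 : ℝ) else 0)
    (htr : ∑ i, (A * g (e i) (f i) + B * g β (e i) * g β (f i)) = 1) :
    A = 1 / (n : ℝ) ∧
    ¬ ∃ α : V, α ≠ 0 ∧ ∀ y : V,
        A * g α y + B * g β α * g β y =
          (((n : ℝ) - 3) / (2 * ((n : ℝ) - 2))) * g α y := by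
  have hcard : Fintype.card ι = n := by
    rw [← Module.finrank_eq_card_basis e, hdim]
  have hnR : (5 : ℝ) ≤ (n : ℝ) := by exact_mod_cast hn
  -- g β (f i) = repr β i
  have hrepr : ∀ i, g β (f i) = e.repr β i := by
    intro i
    conv_lhs => rw [← e.sum_repr β]
    simp [map_sum, LinearMap.sum_apply, hdual, -Module.Basis.sum_repr]
  -- the cross term vanishes
  have hzero : ∑ i, g β (e i) * g β (f i) = 0 := by
    have h1 : g β (∑ i, e.repr β i • e i) = ∑ i, e.repr β i * g β (e i) := by
      simp [-Module.Basis.sum_repr]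
    rw [e.sum_repr] at h1
    calc ∑ i, g β (e i) * g β (f i) = ∑ i, e.repr β i * g β (e i) := by
          refine Finset.sum_congr rfl fun i _ => ?_
          rw [hrepr i, mul_comm]
      _ = g β β := h1.symm
      _ = 0 := hβ
  have hsum1 : ∑ i, A * g (e i) (f i) = A * n := by
    have : ∀ i, A * g (e i) (f i) = A := by
      intro i; rw [hdual]; simp
    rw [Finset.sum_congr rfl fun i _ => this i]
    simp [hcard, mul_comm]
  have hAn : A * n = 1 := by
    have := htr
    rw [Finset.sum_add_distrib, hsum1] at this
    have h2 : ∑ i, B * g β (e i) * g β (f i) = 0 := by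
      have : ∑ i, B * g β (e i) * g β (f i)
          = B * ∑ i, g β (e i) * g β (f i) := by
        rw [Finset.mul_sum]
        exact Finset.sum_congr rfl fun i _ => mul_assoc _ _ _
      rw [this, hzero, mul_zero]
    rw [h2, add_zero] at this
    exact this
  have hn0 : (n : ℝ) ≠ 0 := by linarith
  have hA : A = 1 / (n : ℝ) := by field_simp at hAn ⊢; linarith
  refine ⟨hA, ?_⟩
  rintro ⟨α, hα, heig⟩
  set lam : ℝ := ((n : ℝ) - 3) / (2 * ((n : ℝ) - 2)) with hlam
  have hAne : A ≠ lam := by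
    rw [hA, hlam]
    intro h
    have h2 : 2 * ((n : ℝ) - 2) ≠ 0 := by linarith
    field_simp at h
    rw [eq_div_iff (by linarith)] at h
    nlinarith
  -- test against β
  have hβα : g β α = 0 := by
    have := heig β
    rw [hgsymm α β, hβ, mul_zero, add_zero] at this
    have h' : (A - lam) * g β α = 0 := by linarith
    rcases mul_eq_zero.mp h' with h | h
    · exact absurd (by linarith : A = lam) hAne
    · exact h
  have hαy : ∀ y, g α y = 0 := by
    intro y
    have := heig y
    rw [hβα, mul_zero, zero_mul, add_zero] at this
    have h' : (A - lam) * g α y = 0 := by linarith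
    rcases mul_eq_zero.mp h' with h | h
    · exact absurd (by linarith : A = lam) hAne
    · exact h
  exact hα (hgnd α hαy)
end

section
/- Let C be a Weyl-type tensor on (V,g) and let α ∈ V satisfy the conformal recurrence identity with g(α,α) < 0 (a timelike recurrence vector, g being of Lorentzian signature). Then for all x, y ∈ V with g(α,x) = g(α,y) = 0 and all z ∈ V: C(x,y,z,α) = 0. In particular every component of C having exactly one slot along α and the remaining slots g-orthogonal to α vanishes, i.e. the Weyl tensor is purely electric with respect to the unit timelike vector u = α/√(−g(α,α)). -/
/-- on a conformally recurrent space with timelike recurrence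
vector (`g(α,α) < 0`), every component of the Weyl tensor with exactly one slot
along `α` and the remaining slots `g`-orthogonal to `α` vanishes: the Weyl
tensor is purely electric with respect to `u = α/√(−g(α,α))`. -/
theorem purely_electric_of_timelike_recurrence
    (V : Type) [AddCommGroup V] [Module ℝ V] [FiniteDimensional ℝ V]
    (n : ℕ) (hn : 5 ≤ n) (hdim : Module.finrank ℝ V = n)
    (g : V →ₗ[ℝ] V →ₗ[ℝ] ℝ)
    (hgsymm : ∀ x y : V, g x y = g y x)
    (hgnd : ∀ x : V, (∀ y : V, g x y = 0) → x = 0)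
    (C : V →ₗ[ℝ] V →ₗ[ℝ] V →ₗ[ℝ] V →ₗ[ℝ] ℝ)
    (hC : IsWeylTensor V g C)
    (α : V) (hrec : ConfRecVec n V g C α) (hα : g α α < 0) :
    ∀ x y : V, g α x = 0 → g α y = 0 → ∀ z : V, C x y z α = 0 := by
  intro x y hx hy z
  have hs := hrec x y α z α
  have h1 : C y x α α = 0 := by have := hC.antisym_snd y x α α; linarith
  have h2 : C α y α α = 0 := by have := hC.antisym_snd α y α α; linarith
  have h3 : C x α α α = 0 := by have := hC.antisym_snd x α α α; linarith
  have hyα : g y α = 0 := (hgsymm y α).trans hy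
  have hxα : g x α = 0 := (hgsymm x α).trans hx
  rw [hx, hy, hyα, hxα, h1, h2, h3] at hs
  have hn' : (5 : ℝ) ≤ (n : ℝ) := by exact_mod_cast hn
  set a := g α α
  set c := C x y z α
  have hs' : (1 - 1 / ((n : ℝ) - 3)) * (a * c) = 0 := by ring_nf; ring_nf at hs; linarith
  have hfrac : 1 / ((n : ℝ) - 3) < 1 := by
    rw [div_lt_one (by linarith)]; linarith
  have hne : (1 - 1 / ((n : ℝ) - 3)) ≠ 0 := by linarith
  have hac : a * c = 0 := by
    rcases mul_eq_zero.mp hs' with h | h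
    · exact absurd h hne
    · exact h
  rcases mul_eq_zero.mp hac with h | h
  · exact absurd h (ne_of_lt hα)
  · exact h
end
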